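/- arXiv:1607.05699 — 11 statements merged into one kernel-verified Lean document; each statement's English description precedes it below -/
import Mathlib

section
/- Let β > 0 and δ > 0 and let a > δ/β. Let f : ℝ → ℝ be differentiable on [0, ∞) satisfying the logistic-type SIS mean-field dynamics f'(t) = f(t)·((1 − f(t))·a·β − δ) for all t ≥ 0, with initial condition f(0) ∈ (0, 1). Then f(t) converges to 1 − δ/(β·a) as t → ∞. -/
/-!
Factoring out `β a` puts the equation in the logistic form `f' = β a · f · (θ - f)` with
carrying capacity `θ = 1 - δ / (β a)`, which is positive exactly because `a` exceeds the critical
degree. The logistic equation has the closed-form solution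
`θ c / (c + (θ - c) e^{-β a θ t})`, which tends to `θ` whenever `c = f 0 > 0`. Its right-hand
side is a polynomial, hence locally Lipschitz, so `f` coincides with that solution for `t ≥ 0`.
-/

open Real Set Filter Topology

section Uniqueness

variable {E : Type*} [NormedAddCommGroup E] [NormedSpace ℝ E]

theorem eqOn_Ici_of_hasDerivAt_of_locallyLipschitz {v : E → E} (hv : LocallyLipschitz v)
    {f g : ℝ → E} {a : ℝ} (hf : ∀ t, a ≤ t → HasDerivAt f (v (f t)) t)
    (hg : ∀ t, a ≤ t → HasDerivAt g (v (g t)) t) (ha : f a = g a) :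
    EqOn f g (Ici a) := by
  intro T hT
  have hfc : ContinuousOn f (Icc a T) := fun t ht => (hf t ht.1).continuousAt.continuousWithinAt
  have hgc : ContinuousOn g (Icc a T) := fun t ht => (hg t ht.1).continuousAt.continuousWithinAt
  -- Both trajectories on `[a, T]` stay in a compact set, on which `v` is Lipschitz.
  set s := f '' Icc a T ∪ g '' Icc a T
  have hs : IsCompact s := (isCompact_Icc.image_of_continuousOn hfc).union
    (isCompact_Icc.image_of_continuousOn hgc)
  obtain ⟨K, hK⟩ := hv.locallyLipschitzOn.exists_lipschitzOnWith_of_compact hs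
  exact ODE_solution_unique_of_mem_Icc_right (v := fun _ => v) (s := fun _ => s)
    (fun _ _ => hK) hfc (fun t ht => (hf t ht.1).hasDerivWithinAt)
    (fun t ht => Or.inl ⟨t, Ico_subset_Icc_self ht, rfl⟩) hgc
    (fun t ht => (hg t ht.1).hasDerivWithinAt)
    (fun t ht => Or.inr ⟨t, Ico_subset_Icc_self ht, rfl⟩) ha ⟨hT, le_rfl⟩

end Uniqueness

namespace Logistic

variable (k θ c : ℝ)

/-- The solution of `x' = k x (θ - x)` with `x 0 = c`. -/
noncomputable def solution (t : ℝ) : ℝ :=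
  θ * c / (c + (θ - c) * exp (-(k * θ * t)))

theorem solution_zero {θ : ℝ} (hθ : θ ≠ 0) : solution k θ c 0 = c := by
  simp [solution, hθ]

variable {k θ c}

theorem solution_denom_pos (hc : 0 < c) (hθ : 0 < θ) {t : ℝ} (ht : 0 ≤ k * θ * t) :
    0 < c + (θ - c) * exp (-(k * θ * t)) := by
  have he : 0 < exp (-(k * θ * t)) := exp_pos _
  have he1 : exp (-(k * θ * t)) ≤ 1 := exp_le_one_iff.mpr (neg_nonpos.mpr ht)
  nlinarith

theorem hasDerivAt_solution {t : ℝ} (hD : c + (θ - c) * exp (-(k * θ * t)) ≠ 0) :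
    HasDerivAt (solution k θ c)
      (k * solution k θ c t * (θ - solution k θ c t)) t := by
  have hD' : HasDerivAt (fun t => c + (θ - c) * exp (-(k * θ * t)))
      ((θ - c) * (exp (-(k * θ * t)) * -(k * θ))) t := by
    have := ((hasDerivAt_id t).const_mul (k * θ)).neg.exp.const_mul (θ - c) |>.const_add c
    simpa using this
  refine ((hasDerivAt_const t (θ * c)).div hD' hD).congr_deriv ?_
  simp only [solution]
  generalize exp (-(k * θ * t)) = e at hD ⊢
  field_simp
  ring

theorem tendsto_solution (hc : c ≠ 0) (hkθ : 0 < k * θ) :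
    Tendsto (solution k θ c) atTop (𝓝 θ) := by
  have he : Tendsto (fun t => exp (-(k * θ * t))) atTop (𝓝 0) :=
    tendsto_exp_atBot.comp (tendsto_neg_atTop_atBot.comp (tendsto_id.const_mul_atTop hkθ))
  have hD := (he.const_mul (θ - c)).const_add c
  rw [mul_zero, add_zero] at hD
  have := (tendsto_const_nhds (x := θ * c)).div hD hc
  rwa [mul_div_cancel_right₀ θ hc] at this

end Logistic

/-- **SIS mean-field dynamics above the critical degree.**
If `β, δ > 0`, the common degree `a` exceeds the critical degree `δ/β`, and
`f` solves `f'(t) = f(t)·((1 − f(t))·a·β − δ)` on `[0, ∞)` with `f 0 ∈ (0, 1)`,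
then `f(t) → 1 − δ/(β·a)` as `t → ∞`. -/
theorem sis_fixed_strategy_converges_to_endemic
    (β δ a : ℝ) (hβ : 0 < β) (hδ : 0 < δ) (ha : δ / β < a)
    (f : ℝ → ℝ)
    (hode : ∀ t : ℝ, 0 ≤ t → HasDerivAt f (f t * ((1 - f t) * a * β - δ)) t)
    (h0 : f 0 ∈ Set.Ioo (0 : ℝ) 1) :
    Filter.Tendsto f Filter.atTop (nhds (1 - δ / (β * a))) := by
  set k := β * a
  set θ := 1 - δ / (β * a)
  have ha0 : 0 < a := (div_pos hδ hβ).trans ha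
  have hk : 0 < k := mul_pos hβ ha0
  have hθ : 0 < θ := by
    rw [sub_pos, div_lt_one hk, ← div_lt_iff₀' hβ]
    exact ha
  have hf : ∀ t, 0 ≤ t → HasDerivAt f (k * f t * (θ - f t)) t := fun t ht => by
    convert hode t ht using 1
    simp only [k, θ]
    field_simp [ha0.ne']
    ring
  have hsol : ∀ t, 0 ≤ t → HasDerivAt (Logistic.solution k θ (f 0))
      (k * Logistic.solution k θ (f 0) t * (θ - Logistic.solution k θ (f 0) t)) t :=
    fun t ht => Logistic.hasDerivAt_solution
      (Logistic.solution_denom_pos h0.1 hθ (by positivity)).ne'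
  have hlip : LocallyLipschitz fun x : ℝ => k * x * (θ - x) :=
    ContDiff.locallyLipschitz (𝕂 := ℝ) (by fun_prop)
  have hfeq := eqOn_Ici_of_hasDerivAt_of_locallyLipschitz hlip hf hsol
    (Logistic.solution_zero k (f 0) hθ.ne').symm
  refine (Logistic.tendsto_solution h0.1.ne' (mul_pos hk hθ)).congr' ?_
  filter_upwards [eventually_ge_atTop 0] with t ht
  exact (hfeq ht).symm
end

section
/- Let β > 0, δ > 0 and a > δ/β, and let γ > 0 be the unit immunization cost. Define the stationary infection level under immunization parameter η ∈ [0, 1] as θ(η) = max(η − δ/(β·a), 0), and the total cost D(η) = θ(η) + γ·(1 − η). Then: (i) if γ ≤ 1, the point η = δ/(β·a) minimizes D over [0, 1] (this minimizer is unique when γ < 1); (ii) if γ > 1, the point η = 1 is the unique minimizer of D over [0, 1]. -/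
/-! The cost `D(η) = max (η - c) 0 + γ (1 - η)` is piecewise linear with a kink at the
threshold `c = δ/(βa)`: its slope is `-γ` below `c` and `1 - γ` above. For `0 < γ < 1` it
therefore falls and then rises, so `c` is the unique minimizer; for `γ > 1` it is strictly
decreasing, so the largest admissible `η = 1` wins. -/

namespace ImmunizationCost

def totalCost (c γ η : ℝ) : ℝ := max (η - c) 0 + γ * (1 - η)

theorem totalCost_sub_totalCost_threshold (c γ η : ℝ) :
    totalCost c γ η - totalCost c γ c = (1 - γ) * max (η - c) 0 + γ * max (c - η) 0 := by
  unfold totalCost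
  rw [sub_self, max_self]
  rcases le_total η c with h | h
  · rw [max_eq_right (by linarith : η - c ≤ 0), max_eq_left (by linarith : 0 ≤ c - η)]
    ring
  · rw [max_eq_left (by linarith : 0 ≤ η - c), max_eq_right (by linarith : c - η ≤ 0)]
    ring

theorem totalCost_threshold_le {c γ : ℝ} (hγ₀ : 0 ≤ γ) (hγ₁ : γ ≤ 1) (η : ℝ) :
    totalCost c γ c ≤ totalCost c γ η := by
  have := totalCost_sub_totalCost_threshold c γ η
  have : 0 ≤ (1 - γ) * max (η - c) 0 := mul_nonneg (by linarith) (le_max_right _ _)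
  have : 0 ≤ γ * max (c - η) 0 := mul_nonneg hγ₀ (le_max_right _ _)
  linarith

theorem totalCost_threshold_lt {c γ η : ℝ} (hγ₀ : 0 < γ) (hγ₁ : γ < 1) (hη : η ≠ c) :
    totalCost c γ c < totalCost c γ η := by
  have := totalCost_sub_totalCost_threshold c γ η
  have : 0 ≤ (1 - γ) * max (η - c) 0 := mul_nonneg (by linarith) (le_max_right _ _)
  have : 0 ≤ γ * max (c - η) 0 := mul_nonneg hγ₀.le (le_max_right _ _)
  rcases hη.lt_or_gt with h | h
  · have : 0 < γ * max (c - η) 0 := mul_pos hγ₀ (lt_max_of_lt_left (by linarith))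
    linarith
  · have : 0 < (1 - γ) * max (η - c) 0 := mul_pos (by linarith) (lt_max_of_lt_left (by linarith))
    linarith

theorem strictAnti_totalCost {c γ : ℝ} (hγ : 1 < γ) : StrictAnti (totalCost c γ) := by
  intro η η' h
  have : max (η' - c) 0 ≤ max (η - c) 0 + (η' - η) :=
    max_le (by linarith [le_max_left (η - c) 0]) (by linarith [le_max_right (η - c) 0])
  unfold totalCost
  nlinarith

end ImmunizationCost

theorem optimal_protection_fixed_strategy_general
    (β δ a γ : ℝ) (hγ : 0 < γ) :
    (γ ≤ 1 →
      (∀ η ∈ Set.Icc (0 : ℝ) 1,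
        (max (δ / (β * a) - δ / (β * a)) 0 + γ * (1 - δ / (β * a))) ≤
          (max (η - δ / (β * a)) 0 + γ * (1 - η))) ∧
      (γ < 1 → ∀ η ∈ Set.Icc (0 : ℝ) 1, η ≠ δ / (β * a) →
        (max (δ / (β * a) - δ / (β * a)) 0 + γ * (1 - δ / (β * a))) <
          (max (η - δ / (β * a)) 0 + γ * (1 - η)))) ∧
    (1 < γ → ∀ η ∈ Set.Icc (0 : ℝ) 1, η ≠ 1 →
      (max (1 - δ / (β * a)) 0 + γ * (1 - 1)) <
        (max (η - δ / (β * a)) 0 + γ * (1 - η))) :=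
  ⟨fun hγ₁ =>
    ⟨fun η _ => ImmunizationCost.totalCost_threshold_le hγ.le hγ₁ η,
     fun hγ₁' _ _ hη => ImmunizationCost.totalCost_threshold_lt hγ hγ₁' hη⟩,
   fun hγ₁ _ hη hη₁ => ImmunizationCost.strictAnti_totalCost hγ₁ (lt_of_le_of_ne hη.2 hη₁)⟩

/-- **Optimal immunization under a fixed link-formation strategy.**
With stationary infection level `θ(η) = max (η − δ/(β·a)) 0` and total cost
`D(η) = θ(η) + γ·(1 − η)`:
(i) if `γ ≤ 1` then `η = δ/(β·a)` minimizes `D` over `[0,1]` (uniquely when `γ < 1`);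
(ii) if `γ > 1` then `η = 1` is the unique minimizer of `D` over `[0,1]`. -/
theorem optimal_protection_fixed_strategy
    (β δ a γ : ℝ) (hβ : 0 < β) (hδ : 0 < δ) (ha : δ / β < a) (hγ : 0 < γ) :
    (γ ≤ 1 →
      (∀ η ∈ Set.Icc (0 : ℝ) 1,
        (max (δ / (β * a) - δ / (β * a)) 0 + γ * (1 - δ / (β * a))) ≤
          (max (η - δ / (β * a)) 0 + γ * (1 - η))) ∧
      (γ < 1 → ∀ η ∈ Set.Icc (0 : ℝ) 1, η ≠ δ / (β * a) →
        (max (δ / (β * a) - δ / (β * a)) 0 + γ * (1 - δ / (β * a))) <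
          (max (η - δ / (β * a)) 0 + γ * (1 - η)))) ∧
    (1 < γ → ∀ η ∈ Set.Icc (0 : ℝ) 1, η ≠ 1 →
      (max (1 - δ / (β * a)) 0 + γ * (1 - 1)) <
        (max (η - δ / (β * a)) 0 + γ * (1 - η))) :=
  optimal_protection_fixed_strategy_general β δ a γ hγ
end

section
/- Let β > 0 and δ > 0, and let u : ℝ → ℝ be twice continuously differentiable with u(0) = 0, u''(x) < 0 for all x > 0, and suppose there exists W > δ/β with u'(W) = 0 (so u'(x) > 0 for x ∈ [0, W) and u'(x) < 0 for x > W). Define the system efficiency E(a) = u(a) for 0 < a ≤ δ/β and E(a) = (δ/(β·a))·u(a) for a ≥ δ/β. Then a = δ/β is the unique maximizer of E over (0, ∞), and the optimal efficiency equals u(δ/β). -/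
/-!
Below the critical degree `δ/β` the epidemic dies out and `E = u`, which is strictly increasing
on `[0, W] ∋ δ/β`. Above it, `E a = (δ/β) · (u a / a)`, and the secant slope `u a / a` of the
strictly concave `u` through the origin strictly decreases in `a`, so `E a < u (δ/β)`.
-/

open Set

theorem StrictConcaveOn.div_mul_lt_of_map_zero {𝕜 : Type*} [Field 𝕜] [LinearOrder 𝕜]
    [IsStrictOrderedRing 𝕜] {s : Set 𝕜} {f : 𝕜 → 𝕜} (hf : StrictConcaveOn 𝕜 s f)
    (h0 : (0 : 𝕜) ∈ s) (hf0 : f 0 = 0) {c a : 𝕜} (hc : c ∈ s) (ha : a ∈ s) (hc0 : 0 < c)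
    (hca : c < a) : c / a * f a < f c := by
  have hslope : f a / a < f c / c := by
    simpa [hf0] using hf.secant_strict_mono h0 hc ha hc0.ne' (hc0.trans hca).ne' hca
  calc c / a * f a = c * (f a / a) := by ring
    _ < c * (f c / c) := mul_lt_mul_of_pos_left hslope hc0
    _ = f c := mul_div_cancel₀ _ hc0.ne'

theorem strictMonoOn_Icc_of_strictAntiOn_deriv {u : ℝ → ℝ} {a W : ℝ} (hu : Continuous u)
    (hanti : StrictAntiOn (deriv u) (Icc a W)) (huW : deriv u W = 0) :
    StrictMonoOn u (Icc a W) := by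
  refine strictMonoOn_of_deriv_pos (convex_Icc a W) hu.continuousOn fun x hx => ?_
  rw [interior_Icc] at hx
  rw [← huW]
  exact hanti (Ioo_subset_Icc_self hx) (right_mem_Icc.2 (hx.1.trans hx.2).le) hx.2

/-- **Social optimum under fixed strategies.**
If `u` is `C²` with `u 0 = 0`, `u'' < 0` on `(0, ∞)`, and there exists `W > δ/β`
with `u' W = 0`, then the system efficiency
`E(a) = u(a)` for `0 < a ≤ δ/β` and `E(a) = (δ/(β·a))·u(a)` for `a ≥ δ/β`
is uniquely maximized over `(0, ∞)` at the critical degree `a = δ/β`,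
with optimal value `u(δ/β)`. -/
theorem social_optimum_at_critical_degree
    (β δ : ℝ) (hβ : 0 < β) (hδ : 0 < δ)
    (u : ℝ → ℝ) (hu : ContDiff ℝ 2 u) (hu0 : u 0 = 0)
    (hu'' : ∀ x : ℝ, 0 < x → deriv (deriv u) x < 0)
    (W : ℝ) (hW : δ / β < W) (huW : deriv u W = 0)
    (E : ℝ → ℝ)
    (hE1 : ∀ a : ℝ, 0 < a → a ≤ δ / β → E a = u a)
    (hE2 : ∀ a : ℝ, δ / β ≤ a → E a = (δ / (β * a)) * u a) :
    (∀ a : ℝ, 0 < a → a ≠ δ / β → E a < E (δ / β)) ∧ E (δ / β) = u (δ / β) := by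
  set c := δ / β
  have hc : 0 < c := div_pos hδ hβ
  have hEc : E c = u c := hE1 c hc le_rfl
  have hu''_pos : ∀ x ∈ interior (Ici (0 : ℝ)), deriv^[2] u x < 0 := fun x hx =>
    hu'' x (interior_Ici.subset hx)
  have hanti : StrictAntiOn (deriv u) (Ici 0) :=
    strictAntiOn_of_deriv_neg (convex_Ici 0) (hu.continuous_deriv one_le_two).continuousOn hu''_pos
  have hconc : StrictConcaveOn ℝ (Ici 0) u :=
    strictConcaveOn_of_deriv2_neg (convex_Ici 0) hu.continuous.continuousOn hu''_pos
  refine ⟨fun a ha hne => ?_, hEc⟩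
  rcases hne.lt_or_gt with hac | hca
  · rw [hE1 a ha hac.le, hEc]
    exact strictMonoOn_Icc_of_strictAntiOn_deriv hu.continuous (hanti.mono Icc_subset_Ici_self)
      huW ⟨ha.le, (hac.trans hW).le⟩ ⟨hc.le, hW.le⟩ hac
  · rw [hE2 a hca.le, ← div_div, hEc]
    exact hconc.div_mul_lt_of_map_zero self_mem_Ici hu0 hc.le ha.le hc hca
end

section
/- Let β > 0, δ > 0, ρ > 0, let u : ℝ → ℝ be twice continuously differentiable with u(0) = 0, u'(x) > 0 for x ∈ [0, W), u'(W) = 0, and u''(x) < 0 for x ∈ [0, W], and fix θ ∈ (0, 1]. Then the function a ↦ u(a)/(ρ + δ + β·θ·a) on [0, W] attains its maximum at a unique point a* ∈ (0, W), and a* is the unique solution in (0, W) of the first-order condition u'(a)·(ρ + δ + β·θ·a) = u(a)·β·θ. -/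
/-!
Write `D(x) = k + c x` with `k = ρ + δ` and `c = β θ`. The derivative of `u / D` is `N / D²` with
`N = u' D - u c`, and the terms `± u' c` cancel in `N' = u'' D < 0`, so `N` is strictly decreasing
on `[0, W]`. Since `N 0 = u'(0) k > 0` and `N W = -u(W) c < 0`, `N` has exactly one zero `a*` in
`(0, W)`; `u / D` increases strictly before it and decreases strictly after it.
-/

open Set

noncomputable def focNumerator (u : ℝ → ℝ) (k c x : ℝ) : ℝ :=
  deriv u x * (k + c * x) - u x * c

theorem apply_lt_of_deriv_pos_of_deriv_neg {f : ℝ → ℝ} {p a q : ℝ}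
    (hf : ContinuousOn f (Icc p q)) (ha : a ∈ Icc p q)
    (hpos : ∀ x ∈ Ioo p a, 0 < deriv f x) (hneg : ∀ x ∈ Ioo a q, deriv f x < 0) :
    ∀ x ∈ Icc p q, x ≠ a → f x < f a := by
  have hmono : StrictMonoOn f (Icc p a) :=
    strictMonoOn_of_deriv_pos (convex_Icc p a) (hf.mono (Icc_subset_Icc_right ha.2))
      (by rwa [interior_Icc])
  have hanti : StrictAntiOn f (Icc a q) :=
    strictAntiOn_of_deriv_neg (convex_Icc a q) (hf.mono (Icc_subset_Icc_left ha.1))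
      (by rwa [interior_Icc])
  intro x hx hxa
  rcases hxa.lt_or_gt with h | h
  · exact hmono ⟨hx.1, h.le⟩ ⟨ha.1, le_rfl⟩ h
  · exact hanti ⟨le_rfl, ha.2⟩ ⟨h.le, hx.2⟩ h

section

variable {u : ℝ → ℝ} {k c W : ℝ}

theorem hasDerivAt_affine (k c x : ℝ) : HasDerivAt (fun y => k + c * y) c x := by
  simpa using ((hasDerivAt_id x).const_mul c).const_add k

theorem hasDerivAt_div_affine {x : ℝ} (hu : DifferentiableAt ℝ u x) (hD : k + c * x ≠ 0) :
    HasDerivAt (fun y => u y / (k + c * y)) (focNumerator u k c x / (k + c * x) ^ 2) x :=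
  hu.hasDerivAt.div (hasDerivAt_affine k c x) hD

theorem hasDerivAt_focNumerator {x : ℝ} (hu : DifferentiableAt ℝ u x)
    (hu' : DifferentiableAt ℝ (deriv u) x) :
    HasDerivAt (focNumerator u k c) (deriv (deriv u) x * (k + c * x)) x :=
  ((hu'.hasDerivAt.mul (hasDerivAt_affine k c x)).sub (hu.hasDerivAt.mul_const c)).congr_deriv
    (by ring)

theorem continuous_focNumerator (hu : Differentiable ℝ u) (hu' : Differentiable ℝ (deriv u)) :
    Continuous (focNumerator u k c) :=
  continuous_iff_continuousAt.2 fun x =>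
    (hasDerivAt_focNumerator (k := k) (c := c) (hu x) (hu' x)).continuousAt

theorem strictAntiOn_focNumerator (hu : Differentiable ℝ u) (hu' : Differentiable ℝ (deriv u))
    (hk : 0 < k) (hc : 0 ≤ c) (hu'' : ∀ x ∈ Ioo 0 W, deriv (deriv u) x < 0) :
    StrictAntiOn (focNumerator u k c) (Icc 0 W) := by
  refine strictAntiOn_of_deriv_neg (convex_Icc 0 W)
    (continuous_focNumerator hu hu').continuousOn fun x hx => ?_
  rw [interior_Icc] at hx
  rw [(hasDerivAt_focNumerator (hu x) (hu' x)).deriv]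
  exact mul_neg_of_neg_of_pos (hu'' x hx) (by nlinarith [hx.1])

theorem exists_focNumerator_eq_zero (hu : Differentiable ℝ u) (hu' : Differentiable ℝ (deriv u))
    (hk : 0 < k) (hc : 0 < c) (hW : 0 < W) (hu0 : u 0 = 0)
    (hpos : ∀ x ∈ Ico 0 W, 0 < deriv u x) (huW : deriv u W = 0) :
    ∃ a ∈ Ioo 0 W, focNumerator u k c a = 0 := by
  have hmono : StrictMonoOn u (Icc 0 W) :=
    strictMonoOn_of_deriv_pos (convex_Icc 0 W) hu.continuous.continuousOn fun x hx => by
      rw [interior_Icc] at hx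
      exact hpos x (Ioo_subset_Ico_self hx)
  have huW_pos : 0 < u W := by
    simpa [hu0] using hmono (left_mem_Icc.2 hW.le) (right_mem_Icc.2 hW.le) hW
  have hN0 : 0 < focNumerator u k c 0 := by
    simpa [focNumerator, hu0] using mul_pos (hpos 0 (left_mem_Ico.2 hW)) hk
  have hNW : focNumerator u k c W < 0 := by
    simpa [focNumerator, huW] using mul_pos huW_pos hc
  exact intermediate_value_Ioo' hW.le (continuous_focNumerator hu hu').continuousOn ⟨hNW, hN0⟩

theorem div_affine_lt_of_focNumerator_eq_zero (hu : Differentiable ℝ u)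
    (hu' : Differentiable ℝ (deriv u)) (hk : 0 < k) (hc : 0 ≤ c)
    (hu'' : ∀ x ∈ Ioo 0 W, deriv (deriv u) x < 0) {a : ℝ} (ha : a ∈ Icc 0 W)
    (hNa : focNumerator u k c a = 0) :
    ∀ x ∈ Icc 0 W, x ≠ a → u x / (k + c * x) < u a / (k + c * a) := by
  have hD : ∀ x, 0 ≤ x → 0 < k + c * x := fun x hx => by nlinarith
  have hN := strictAntiOn_focNumerator hu hu' hk hc hu''
  have hderiv : ∀ x, 0 < x →
      deriv (fun y => u y / (k + c * y)) x = focNumerator u k c x / (k + c * x) ^ 2 :=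
    fun x hx => (hasDerivAt_div_affine (hu x) (hD x hx.le).ne').deriv
  refine apply_lt_of_deriv_pos_of_deriv_neg
    (hu.continuous.continuousOn.div (by fun_prop) fun x hx => (hD x hx.1).ne') ha
    (fun x hx => ?_) (fun x hx => ?_)
  · rw [hderiv x hx.1]
    refine div_pos ?_ (pow_pos (hD x hx.1.le) 2)
    simpa [hNa] using hN ⟨hx.1.le, hx.2.le.trans ha.2⟩ ha hx.2
  · have hx0 : 0 < x := lt_of_le_of_lt ha.1 hx.1
    rw [hderiv x hx0]
    refine div_neg_of_neg_of_pos ?_ (pow_pos (hD x hx0.le) 2)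
    simpa [hNa] using hN ha ⟨hx0.le, hx.2.le⟩ hx.1

end

/-- **Unique best response to a conjectured infection level.**
For `θ ∈ (0, 1]`, the long-term utility `a ↦ u(a)/(ρ + δ + β·θ·a)` on `[0, W]`
attains its maximum at a unique point `a* ∈ (0, W)`, and `a*` is the unique
solution in `(0, W)` of the first-order condition
`u'(a)·(ρ + δ + β·θ·a) = u(a)·β·θ`. -/
theorem unique_best_response
    (β δ ρ W : ℝ) (hβ : 0 < β) (hδ : 0 < δ) (hρ : 0 < ρ) (hW : 0 < W)
    (u : ℝ → ℝ) (hu : ContDiff ℝ 2 u) (hu0 : u 0 = 0)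
    (hu' : ∀ x : ℝ, 0 ≤ x → x < W → 0 < deriv u x) (huW : deriv u W = 0)
    (hu'' : ∀ x : ℝ, 0 ≤ x → x ≤ W → deriv (deriv u) x < 0)
    (θ : ℝ) (hθ : θ ∈ Set.Ioc (0 : ℝ) 1) :
    ∃ a : ℝ, a ∈ Set.Ioo 0 W ∧
      IsMaxOn (fun x => u x / (ρ + δ + β * θ * x)) (Set.Icc 0 W) a ∧
      (∀ a' ∈ Set.Icc (0 : ℝ) W,
        IsMaxOn (fun x => u x / (ρ + δ + β * θ * x)) (Set.Icc 0 W) a' → a' = a) ∧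
      (∀ a' ∈ Set.Ioo (0 : ℝ) W,
        (deriv u a' * (ρ + δ + β * θ * a') = u a' * (β * θ) ↔ a' = a)) := by
  have hu1 : Differentiable ℝ u := hu.differentiable (by norm_num)
  have hu2 : Differentiable ℝ (deriv u) :=
    (hu.iterate_deriv' 1 1).differentiable (by norm_num)
  have hk : 0 < ρ + δ := add_pos hρ hδ
  have hc : 0 < β * θ := mul_pos hβ hθ.1
  have hu''_Ioo : ∀ x ∈ Ioo 0 W, deriv (deriv u) x < 0 := fun x hx => hu'' x hx.1.le hx.2.le
  obtain ⟨a, ha, hNa⟩ := exists_focNumerator_eq_zero hu1 hu2 hk hc hW hu0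
    (fun x hx => hu' x hx.1 hx.2) huW
  have hlt := div_affine_lt_of_focNumerator_eq_zero hu1 hu2 hk hc.le hu''_Ioo
    (Ioo_subset_Icc_self ha) hNa
  refine ⟨a, ha, isMaxOn_iff.2 fun x hx => ?_, fun a' ha' hmax => ?_, fun a' ha' => ?_⟩
  · rcases eq_or_ne x a with rfl | hxa
    · exact le_rfl
    · exact (hlt x hx hxa).le
  · by_contra hne
    exact (hlt a' ha' hne).not_ge (hmax (Ioo_subset_Icc_self ha))
  · have hinj := (strictAntiOn_focNumerator hu1 hu2 hk hc.le hu''_Ioo).injOn.eq_iff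
      (Ioo_subset_Icc_self ha') (Ioo_subset_Icc_self ha)
    rwa [hNa, focNumerator, sub_eq_zero] at hinj
end

section
/- Let β > 0, δ > 0, ρ > 0, and let u : ℝ → ℝ be twice continuously differentiable with u(0) = 0, u'(x) > 0 for x ∈ [0, W), u'(W) = 0, and u''(x) < 0 for x ∈ [0, W], where W > δ/β. Then there exists a unique a ∈ (δ/β, W) satisfying the conjectural-equilibrium equation u(a)/u'(a) − a = (ρ + δ)/(β − δ/a). In particular, the equilibrium number of links a^CE strictly exceeds the critical degree a_c = δ/β, so the stationary infection level 1 − δ/(β·a^CE) is strictly positive. -/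
/-!
Write `c = ρ + δ`. On `(δ/β, W)` the left side `u a / u' a - a` is strictly increasing, its
derivative being `-u u'' / u'^2 > 0` because `u` is positive there (it increases from `u 0 = 0`),
while the right side `c / (β - δ/a)` is strictly decreasing, so the two sides meet at most once.
They do meet: after clearing denominators the equation reads
`(u a - a u' a)(β a - δ) = c a u' a`, and the difference of the two sides is negative at the
critical degree `δ/β` and equal to `u W (β W - δ) > 0` at `W`, where `u' W = 0`.
-/

open Set

lemma StrictMonoOn.subsingleton_setOf_eq_of_strictAntiOn {α β : Type*} [LinearOrder α]
    [Preorder β] {g k : α → β} {s : Set α} (hg : StrictMonoOn g s) (hk : StrictAntiOn k s) :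
    {x | x ∈ s ∧ g x = k x}.Subsingleton := by
  suffices ∀ x ∈ s, ∀ y ∈ s, g x = k x → g y = k y → ¬x < y by
    rintro x ⟨hx, hxe⟩ y ⟨hy, hye⟩
    exact le_antisymm (not_lt.1 (this y hy x hx hye hxe)) (not_lt.1 (this x hx y hy hxe hye))
  intro x hx y hy hxe hye hxy
  exact lt_irrefl (g x) <| calc
    g x < g y := hg hx hy hxy
    _ = k y := hye
    _ < k x := hk hx hy hxy
    _ = g x := hxe.symm

lemma hasDerivAt_div_deriv_sub_id {f : ℝ → ℝ} {x : ℝ} (hf : DifferentiableAt ℝ f x)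
    (hf' : DifferentiableAt ℝ (deriv f) x) (hx : deriv f x ≠ 0) :
    HasDerivAt (fun y => f y / deriv f y - y)
      (-(f x * deriv (deriv f) x) / deriv f x ^ 2) x := by
  refine ((hf.hasDerivAt.div hf'.hasDerivAt hx).sub (hasDerivAt_id' x)).congr_deriv ?_
  field_simp
  ring

lemma strictMonoOn_div_deriv_sub_id {f : ℝ → ℝ} {s : Set ℝ} (hs : Convex ℝ s)
    (hf : ∀ x ∈ s, DifferentiableAt ℝ f x) (hf' : ∀ x ∈ s, DifferentiableAt ℝ (deriv f) x)
    (hpos : ∀ x ∈ s, 0 < f x) (hd : ∀ x ∈ s, deriv f x ≠ 0)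
    (hconc : ∀ x ∈ s, deriv (deriv f) x < 0) :
    StrictMonoOn (fun y => f y / deriv f y - y) s := by
  have hderiv x (hx : x ∈ s) := hasDerivAt_div_deriv_sub_id (hf x hx) (hf' x hx) (hd x hx)
  refine strictMonoOn_of_deriv_pos hs
    (fun x hx => (hderiv x hx).continuousAt.continuousWithinAt) fun x hx => ?_
  replace hx := interior_subset hx
  rw [(hderiv x hx).deriv]
  have := hd x hx
  exact div_pos (neg_pos.2 (mul_neg_of_pos_of_neg (hpos x hx) (hconc x hx))) (by positivity)

lemma mul_sub_pos_of_div_lt {β δ a : ℝ} (hβ : 0 < β) (h : δ / β < a) : 0 < β * a - δ := by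
  rw [sub_pos, mul_comm]
  exact (div_lt_iff₀ hβ).1 h

lemma sub_div_pos_of_div_lt {β δ a : ℝ} (hβ : 0 < β) (ha : 0 < a) (h : δ / β < a) :
    0 < β - δ / a := by
  rw [sub_pos, div_lt_iff₀ ha]
  exact sub_pos.1 (mul_sub_pos_of_div_lt hβ h)

lemma strictAntiOn_div_sub_div {β δ c : ℝ} (hβ : 0 < β) (hδ : 0 < δ) (hc : 0 < c) :
    StrictAntiOn (fun a => c / (β - δ / a)) (Ioi (δ / β)) := by
  intro a ha b _ hab
  have ha0 : 0 < a := (div_pos hδ hβ).trans ha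
  exact div_lt_div_of_pos_left hc (sub_div_pos_of_div_lt hβ ha0 ha)
    (sub_lt_sub_left (div_lt_div_of_pos_left hδ ha0 hab) β)

lemma div_sub_eq_div_sub_div_iff {p q a β δ c : ℝ} (hq : q ≠ 0) (ha : a ≠ 0)
    (hβa : β * a - δ ≠ 0) :
    p / q - a = c / (β - δ / a) ↔ (p - a * q) * (β * a - δ) = c * a * q := by
  rw [show β - δ / a = (β * a - δ) / a by field_simp, div_div_eq_mul_div,
    div_sub' hq, div_eq_div_iff hq hβa]
  constructor <;> intro h <;> linarith

lemma exists_mem_Ioo_div_deriv_sub_eq {u : ℝ → ℝ} {β δ c W : ℝ} (hβ : 0 < β) (hδ : 0 < δ)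
    (hc : 0 < c) (hW : δ / β < W) (hu : Continuous u) (hu' : Continuous (deriv u))
    (hderiv_pos : ∀ x ∈ Ico (δ / β) W, 0 < deriv u x) (huW : 0 < u W)
    (hu'W : deriv u W = 0) :
    ∃ a ∈ Ioo (δ / β) W, u a / deriv u a - a = c / (β - δ / a) := by
  set H : ℝ → ℝ := fun a => (u a - a * deriv u a) * (β * a - δ) - c * a * deriv u a
  have hac : 0 < δ / β := div_pos hδ hβ
  have hβac : β * (δ / β) - δ = 0 := by field_simp; ring
  have hH_left : H (δ / β) < 0 := by
    have := hderiv_pos _ ⟨le_rfl, hW⟩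
    simp only [H, hβac, mul_zero, zero_sub, neg_neg_iff_pos]
    positivity
  have hH_right : 0 < H W := by
    have := mul_sub_pos_of_div_lt hβ hW
    simp only [H, hu'W, mul_zero, sub_zero]
    positivity
  have hH : Continuous H := by fun_prop
  obtain ⟨a, ha, hHa⟩ := intermediate_value_Ioo hW.le hH.continuousOn ⟨hH_left, hH_right⟩
  have ha0 : 0 < a := hac.trans ha.1
  exact ⟨a, ha, (div_sub_eq_div_sub_div_iff (hderiv_pos a ⟨ha.1.le, ha.2⟩).ne' ha0.ne'
    (mul_sub_pos_of_div_lt hβ ha.1).ne').2 (sub_eq_zero.1 hHa)⟩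

/-- **Existence and uniqueness of the conjectural equilibrium.**
There is a unique `a ∈ (δ/β, W)` satisfying the conjectural-equilibrium
equation `u(a)/u'(a) − a = (ρ + δ)/(β − δ/a)`.  In particular the equilibrium
degree exceeds the critical degree `δ/β`, so the stationary infection level
`1 − δ/(β·a)` is strictly positive. -/
theorem conjectural_equilibrium_exists_unique
    (β δ ρ W : ℝ) (hβ : 0 < β) (hδ : 0 < δ) (hρ : 0 < ρ) (hW : δ / β < W)
    (u : ℝ → ℝ) (hu : ContDiff ℝ 2 u) (hu0 : u 0 = 0)
    (hu' : ∀ x : ℝ, 0 ≤ x → x < W → 0 < deriv u x) (huW : deriv u W = 0)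
    (hu'' : ∀ x : ℝ, 0 ≤ x → x ≤ W → deriv (deriv u) x < 0) :
    (∃! a : ℝ, a ∈ Set.Ioo (δ / β) W ∧
      u a / deriv u a - a = (ρ + δ) / (β - δ / a)) ∧
    (∀ a ∈ Set.Ioo (δ / β) W,
      u a / deriv u a - a = (ρ + δ) / (β - δ / a) → 0 < 1 - δ / (β * a)) := by
  have hac : 0 < δ / β := div_pos hδ hβ
  have hDu : Differentiable ℝ u := hu.differentiable (by norm_num)
  have hDu' : Differentiable ℝ (deriv u) := hu.differentiable_deriv_two
  have hu_mono : StrictMonoOn u (Icc 0 W) :=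
    strictMonoOn_of_deriv_pos (convex_Icc 0 W) hDu.continuous.continuousOn fun x hx => by
      rw [interior_Icc] at hx
      exact hu' x hx.1.le hx.2
  have hu_pos : ∀ x ∈ Ioc 0 W, 0 < u x := fun x hx =>
    hu0 ▸ hu_mono ⟨le_rfl, hac.le.trans hW.le⟩ (Ioc_subset_Icc_self hx) hx.1
  obtain ⟨a, ha, heq⟩ := exists_mem_Ioo_div_deriv_sub_eq hβ hδ (by positivity : 0 < ρ + δ) hW
    hDu.continuous hDu'.continuous (fun x hx => hu' x (hac.le.trans hx.1) hx.2)
    (hu_pos W ⟨hac.trans hW, le_rfl⟩) huW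
  have hlhs_mono : StrictMonoOn (fun a => u a / deriv u a - a) (Ioo (δ / β) W) :=
    strictMonoOn_div_deriv_sub_id (convex_Ioo _ _) (fun x _ => hDu x) (fun x _ => hDu' x)
      (fun x hx => hu_pos x ⟨hac.trans hx.1, hx.2.le⟩)
      (fun x hx => (hu' x (hac.trans hx.1).le hx.2).ne')
      (fun x hx => hu'' x (hac.trans hx.1).le hx.2.le)
  have hrhs_anti := (strictAntiOn_div_sub_div hβ hδ (by positivity : 0 < ρ + δ)).mono
    (Ioo_subset_Ioi_self : Ioo (δ / β) W ⊆ _)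
  refine ⟨⟨a, ⟨ha, heq⟩, fun b hb =>
    hlhs_mono.subsingleton_setOf_eq_of_strictAntiOn hrhs_anti hb ⟨ha, heq⟩⟩, fun b hb _ => ?_⟩
  rw [sub_pos, div_lt_one (mul_pos hβ (hac.trans hb.1))]
  exact sub_pos.1 (mul_sub_pos_of_div_lt hβ hb.1)
end

section
/- Let β > 0, ρ > 0, and let u : ℝ → ℝ be twice continuously differentiable with u(0) = 0, u'(x) > 0 for x ∈ [0, W), u'(W) = 0, and u''(x) < 0 for x ∈ [0, W]. Suppose 0 < δ₁ < δ₂ with W > δ₂/β, and let a₁, a₂ be the unique solutions in (δ₁/β, W) and (δ₂/β, W) respectively of u(a)/u'(a) − a = (ρ + δₖ)/(β − δₖ/a) for k = 1, 2. Then a₁ < a₂; that is, the conjectural-equilibrium degree a^CE is strictly increasing in the curing rate δ. -/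
/-!
Write `g a = u a / u' a - a` for the left-hand side of the equilibrium equation and
`R δ a = (ρ + δ) / (β - δ / a)` for its right-hand side. Strict concavity of `u`, together with
`u ≥ 0` and `u' > 0` on `[0, W)`, makes `g` strictly increasing there, while `R` is strictly
increasing in `δ` and antitone in `a`. If we had `a₂ ≤ a₁`, then
`g a₂ ≤ g a₁ = R δ₁ a₁ ≤ R δ₁ a₂ < R δ₂ a₂ = g a₂`.
-/

open Set

/-- The tangent line at the right endpoint lies strictly below the graph:
`u y - u x > u' y (y - x)`; dividing by `u' y ≤ u' x` and using `u x ≥ 0` gives the claim. -/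
theorem StrictConcaveOn.strictMonoOn_div_deriv_sub {S : Set ℝ} {u : ℝ → ℝ}
    (hu : StrictConcaveOn ℝ S u) (hd : ∀ x ∈ S, DifferentiableAt ℝ u x)
    (hu_nonneg : ∀ x ∈ S, 0 ≤ u x) (hu'_pos : ∀ x ∈ S, 0 < deriv u x) :
    StrictMonoOn (fun a => u a / deriv u a - a) S := by
  intro x hx y hy hxy
  have htangent : deriv u y * (y - x) < u y - u x := by
    have h := hu.deriv_lt_slope hx hy hxy (hd y hy)
    rwa [slope_def_field, lt_div_iff₀ (sub_pos.2 hxy)] at h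
  have hderiv : deriv u y < deriv u x := hu.strictAntiOn_deriv hd hx hy hxy
  have hpx := hu'_pos x hx
  have hpy := hu'_pos y hy
  calc u x / deriv u x - x
      ≤ u x / deriv u y - x := by gcongr; exact hu_nonneg x hx
    _ < u y / deriv u y - y := by
        rw [div_sub' hpy.ne', div_sub' hpy.ne', div_lt_div_iff_of_pos_right hpy]
        linarith

theorem strictMonoOn_div_deriv_sub_Ico {u : ℝ → ℝ} {W : ℝ} (hu : Differentiable ℝ u)
    (hu0 : u 0 = 0) (hu' : ∀ x : ℝ, 0 ≤ x → x < W → 0 < deriv u x)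
    (hu'' : ∀ x : ℝ, 0 ≤ x → x < W → deriv (deriv u) x < 0) :
    StrictMonoOn (fun a => u a / deriv u a - a) (Ico 0 W) := by
  have hcont : ContinuousOn u (Ico 0 W) := hu.continuous.continuousOn
  have hconc : StrictConcaveOn ℝ (Ico 0 W) u :=
    strictConcaveOn_of_deriv2_neg' (convex_Ico 0 W) hcont fun x hx => hu'' x hx.1 hx.2
  have hmono : StrictMonoOn u (Ico 0 W) :=
    strictMonoOn_of_deriv_pos (convex_Ico 0 W) hcont fun x hx => by
      rw [interior_Ico] at hx
      exact hu' x hx.1.le hx.2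
  exact hconc.strictMonoOn_div_deriv_sub (fun x _ => hu.differentiableAt)
    (fun x hx => hu0 ▸ hmono.monotoneOn ⟨le_rfl, hx.1.trans_lt hx.2⟩ hx hx.1)
    fun x hx => hu' x hx.1 hx.2

theorem sub_div_pos_iff {β δ a : ℝ} (ha : 0 < a) : 0 < β - δ / a ↔ δ < β * a := by
  rw [sub_pos, div_lt_iff₀ ha]

theorem strictMonoOn_add_div_sub_div {β ρ a : ℝ} (hβ : 0 < β) (hρ : 0 ≤ ρ) (ha : 0 < a) :
    StrictMonoOn (fun δ => (ρ + δ) / (β - δ / a)) (Iio (β * a)) := by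
  intro δ₁ h₁ δ₂ h₂ hlt
  rw [div_lt_div_iff₀ ((sub_div_pos_iff ha).2 h₁) ((sub_div_pos_iff ha).2 h₂)]
  have hdiff : (ρ + δ₂) * (β - δ₁ / a) - (ρ + δ₁) * (β - δ₂ / a) = (δ₂ - δ₁) * (β + ρ / a) := by
    ring
  have := mul_pos (sub_pos.2 hlt) (by positivity : 0 < β + ρ / a)
  linarith

theorem antitoneOn_div_sub_div {β δ c : ℝ} (hβ : 0 < β) (hδ : 0 ≤ δ) (hc : 0 ≤ c) :
    AntitoneOn (fun a => c / (β - δ / a)) (Ioi (δ / β)) := by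
  intro a ha a' _ hle
  have ha_pos : 0 < a := (div_nonneg hδ hβ.le).trans_lt ha
  apply div_le_div_of_nonneg_left hc ((sub_div_pos_iff ha_pos).2 ((div_lt_iff₀' hβ).1 ha))
  linarith [div_le_div_of_nonneg_left hδ ha_pos hle]

theorem equilibrium_degree_increasing_in_delta_general
    (β ρ δ₁ δ₂ W : ℝ) (hβ : 0 < β) (hρ : 0 < ρ)
    (hδ₁ : 0 < δ₁) (hδ : δ₁ < δ₂)
    (u : ℝ → ℝ) (hu : ContDiff ℝ 2 u) (hu0 : u 0 = 0)
    (hu' : ∀ x : ℝ, 0 ≤ x → x < W → 0 < deriv u x)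
    (hu'' : ∀ x : ℝ, 0 ≤ x → x ≤ W → deriv (deriv u) x < 0)
    (a₁ a₂ : ℝ)
    (ha₁ : a₁ ∈ Set.Ioo (δ₁ / β) W)
    (heq₁ : u a₁ / deriv u a₁ - a₁ = (ρ + δ₁) / (β - δ₁ / a₁))
    (ha₂ : a₂ ∈ Set.Ioo (δ₂ / β) W)
    (heq₂ : u a₂ / deriv u a₂ - a₂ = (ρ + δ₂) / (β - δ₂ / a₂)) :
    a₁ < a₂ := by
  obtain ⟨h₁, ha₁W⟩ := ha₁
  obtain ⟨h₂, ha₂W⟩ := ha₂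
  have ha₁_pos : 0 < a₁ := (div_pos hδ₁ hβ).trans h₁
  have ha₂_pos : 0 < a₂ := (div_pos (hδ₁.trans hδ) hβ).trans h₂
  have hg := strictMonoOn_div_deriv_sub_Ico (hu.differentiable two_ne_zero) hu0 hu'
    fun x hx₀ hxW => hu'' x hx₀ hxW.le
  have hδ₂a₂ : δ₂ < β * a₂ := (div_lt_iff₀' hβ).1 h₂
  have hδ₁a₂ : δ₁ / β < a₂ := (div_lt_div_of_pos_right hδ hβ).trans h₂
  by_contra! hle
  refine lt_irrefl (u a₂ / deriv u a₂ - a₂) ?_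
  calc u a₂ / deriv u a₂ - a₂
      ≤ u a₁ / deriv u a₁ - a₁ := hg.monotoneOn ⟨ha₂_pos.le, ha₂W⟩ ⟨ha₁_pos.le, ha₁W⟩ hle
    _ = (ρ + δ₁) / (β - δ₁ / a₁) := heq₁
    _ ≤ (ρ + δ₁) / (β - δ₁ / a₂) :=
        antitoneOn_div_sub_div hβ hδ₁.le (by positivity) hδ₁a₂ h₁ hle
    _ < (ρ + δ₂) / (β - δ₂ / a₂) :=
        strictMonoOn_add_div_sub_div hβ hρ.le ha₂_pos (hδ.trans hδ₂a₂) hδ₂a₂ hδ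
    _ = u a₂ / deriv u a₂ - a₂ := heq₂.symm

/-- **The conjectural-equilibrium degree is strictly increasing in the
curing rate `δ`.**  If `0 < δ₁ < δ₂`, `W > δ₂/β`, and `aₖ ∈ (δₖ/β, W)` solves
`u(a)/u'(a) − a = (ρ + δₖ)/(β − δₖ/a)` for `k = 1, 2`, then `a₁ < a₂`. -/
theorem equilibrium_degree_increasing_in_delta
    (β ρ δ₁ δ₂ W : ℝ) (hβ : 0 < β) (hρ : 0 < ρ)
    (hδ₁ : 0 < δ₁) (hδ : δ₁ < δ₂) (hW : δ₂ / β < W)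
    (u : ℝ → ℝ) (hu : ContDiff ℝ 2 u) (hu0 : u 0 = 0)
    (hu' : ∀ x : ℝ, 0 ≤ x → x < W → 0 < deriv u x) (huW : deriv u W = 0)
    (hu'' : ∀ x : ℝ, 0 ≤ x → x ≤ W → deriv (deriv u) x < 0)
    (a₁ a₂ : ℝ)
    (ha₁ : a₁ ∈ Set.Ioo (δ₁ / β) W)
    (heq₁ : u a₁ / deriv u a₁ - a₁ = (ρ + δ₁) / (β - δ₁ / a₁))
    (ha₂ : a₂ ∈ Set.Ioo (δ₂ / β) W)
    (heq₂ : u a₂ / deriv u a₂ - a₂ = (ρ + δ₂) / (β - δ₂ / a₂)) :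
    a₁ < a₂ :=
  equilibrium_degree_increasing_in_delta_general β ρ δ₁ δ₂ W hβ hρ hδ₁ hδ u hu hu0 hu' hu'' a₁ a₂
    ha₁ heq₁ ha₂ heq₂
end

section
/- Let δ > 0, ρ > 0, and let u : ℝ → ℝ be twice continuously differentiable with u(0) = 0, u'(x) > 0 for x ∈ [0, W), u'(W) = 0, and u''(x) < 0 for x ∈ [0, W]. Suppose 0 < β₁ < β₂ with W > δ/β₁, and let a₁, a₂ be the unique solutions in (δ/β₁, W) and (δ/β₂, W) respectively of u(a)/u'(a) − a = (ρ + δ)/(βₖ − δ/a) for k = 1, 2. Then a₁ > a₂; that is, the conjectural-equilibrium degree a^CE is strictly decreasing in the infection rate β. -/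
/-!
Write `F a = u a / u' a - a`. Where `u > 0`, `u' > 0` and `u'' < 0`, the derivative
`F' = -u u'' / u'^2` is positive, so `F` is strictly increasing on `(0, W)`; the right-hand
side `(ρ + δ) / (β - δ / a)` is instead strictly decreasing in both `β` and `a`. If we had
`a₁ ≤ a₂`, then `F a₁ ≤ F a₂ = (ρ + δ) / (β₂ - δ / a₂) < (ρ + δ) / (β₁ - δ / a₁) = F a₁`.
-/

/-- Unlike `strictMonoOn_of_deriv_pos`, no continuity is assumed: a nonzero `deriv` already
forces differentiability. -/
theorem strictMonoOn_of_forall_deriv_pos {f : ℝ → ℝ} {s : Set ℝ} (hs : Convex ℝ s)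
    (hf : ∀ x ∈ s, 0 < deriv f x) : StrictMonoOn f s :=
  strictMonoOn_of_deriv_pos hs
    (fun x hx => (differentiableAt_of_deriv_ne_zero (hf x hx).ne').continuousAt.continuousWithinAt)
    (fun x hx => hf x (interior_subset hx))

theorem hasDerivAt_div_deriv_sub_id_s8 {u : ℝ → ℝ} {x : ℝ} (hu' : deriv u x ≠ 0)
    (hu'' : deriv (deriv u) x ≠ 0) :
    HasDerivAt (fun a => u a / deriv u a - a) (-(u x * deriv (deriv u) x) / deriv u x ^ 2) x := by
  have hdiv := (differentiableAt_of_deriv_ne_zero hu').hasDerivAt.div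
    (differentiableAt_of_deriv_ne_zero hu'').hasDerivAt hu'
  exact (hdiv.sub (hasDerivAt_id x)).congr_deriv (by field_simp; ring)

theorem strictMonoOn_div_deriv_sub_id_s8 {u : ℝ → ℝ} {s : Set ℝ} (hs : Convex ℝ s)
    (hu : ∀ x ∈ s, 0 < u x) (hu' : ∀ x ∈ s, 0 < deriv u x)
    (hu'' : ∀ x ∈ s, deriv (deriv u) x < 0) :
    StrictMonoOn (fun a => u a / deriv u a - a) s :=
  strictMonoOn_of_forall_deriv_pos hs fun x hx => by
    rw [(hasDerivAt_div_deriv_sub_id_s8 (hu' x hx).ne' (hu'' x hx).ne).deriv]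
    have := mul_neg_of_pos_of_neg (hu x hx) (hu'' x hx)
    exact div_pos (by linarith) (pow_pos (hu' x hx) 2)

theorem div_sub_div_lt_div_sub_div {c δ β₁ β₂ a₁ a₂ : ℝ} (hc : 0 < c) (hδ : 0 ≤ δ)
    (ha₁ : 0 < a₁) (ha : a₁ ≤ a₂) (hβ : β₁ < β₂) (hd : 0 < β₁ - δ / a₁) :
    c / (β₂ - δ / a₂) < c / (β₁ - δ / a₁) := by
  have : δ / a₂ ≤ δ / a₁ := div_le_div_of_nonneg_left hδ ha₁ ha
  exact div_lt_div_of_pos_left hc hd (by linarith)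

theorem equilibrium_degree_decreasing_in_beta_general
    (δ ρ β₁ β₂ W : ℝ) (hδ : 0 < δ) (hρ : 0 < ρ)
    (hβ₁ : 0 < β₁) (hβ : β₁ < β₂)
    (u : ℝ → ℝ) (hu0 : u 0 = 0)
    (hu' : ∀ x : ℝ, 0 ≤ x → x < W → 0 < deriv u x)
    (hu'' : ∀ x : ℝ, 0 ≤ x → x ≤ W → deriv (deriv u) x < 0)
    (a₁ a₂ : ℝ)
    (ha₁ : a₁ ∈ Set.Ioo (δ / β₁) W)
    (heq₁ : u a₁ / deriv u a₁ - a₁ = (ρ + δ) / (β₁ - δ / a₁))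
    (ha₂ : a₂ ∈ Set.Ioo (δ / β₂) W)
    (heq₂ : u a₂ / deriv u a₂ - a₂ = (ρ + δ) / (β₂ - δ / a₂)) :
    a₂ < a₁ := by
  obtain ⟨hδa₁, ha₁W⟩ := ha₁
  have ha₁pos : 0 < a₁ := (div_pos hδ hβ₁).trans hδa₁
  by_contra! hle
  have hupos : ∀ x ∈ Set.Ioo 0 W, 0 < u x := fun x hx => hu0 ▸
    strictMonoOn_of_forall_deriv_pos (convex_Ico 0 W) (fun y hy => hu' y hy.1 hy.2)
      ⟨le_rfl, hx.1.trans hx.2⟩ ⟨hx.1.le, hx.2⟩ hx.1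
  have hF := (strictMonoOn_div_deriv_sub_id_s8 (convex_Ioo 0 W) hupos
    (fun x hx => hu' x hx.1.le hx.2) (fun x hx => hu'' x hx.1.le hx.2.le)).monotoneOn
      ⟨ha₁pos, ha₁W⟩ ⟨ha₁pos.trans_le hle, ha₂.2⟩ hle
  have hd₁ : 0 < β₁ - δ / a₁ :=
    sub_pos.2 ((div_lt_iff₀ ha₁pos).2 (by rwa [div_lt_iff₀ hβ₁, mul_comm] at hδa₁))
  have hrhs := div_sub_div_lt_div_sub_div (add_pos hρ hδ) hδ.le ha₁pos hle hβ hd₁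
  linarith

/-- **The conjectural-equilibrium degree is strictly decreasing in the
infection rate `β`.**  If `0 < β₁ < β₂`, `W > δ/β₁`, and `aₖ ∈ (δ/βₖ, W)`
solves `u(a)/u'(a) − a = (ρ + δ)/(βₖ − δ/a)` for `k = 1, 2`, then `a₁ > a₂`. -/
theorem equilibrium_degree_decreasing_in_beta
    (δ ρ β₁ β₂ W : ℝ) (hδ : 0 < δ) (hρ : 0 < ρ)
    (hβ₁ : 0 < β₁) (hβ : β₁ < β₂) (hW : δ / β₁ < W)
    (u : ℝ → ℝ) (hu : ContDiff ℝ 2 u) (hu0 : u 0 = 0)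
    (hu' : ∀ x : ℝ, 0 ≤ x → x < W → 0 < deriv u x) (huW : deriv u W = 0)
    (hu'' : ∀ x : ℝ, 0 ≤ x → x ≤ W → deriv (deriv u) x < 0)
    (a₁ a₂ : ℝ)
    (ha₁ : a₁ ∈ Set.Ioo (δ / β₁) W)
    (heq₁ : u a₁ / deriv u a₁ - a₁ = (ρ + δ) / (β₁ - δ / a₁))
    (ha₂ : a₂ ∈ Set.Ioo (δ / β₂) W)
    (heq₂ : u a₂ / deriv u a₂ - a₂ = (ρ + δ) / (β₂ - δ / a₂)) :
    a₂ < a₁ :=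
  equilibrium_degree_decreasing_in_beta_general δ ρ β₁ β₂ W hδ hρ hβ₁ hβ u hu0 hu' hu'' a₁ a₂ ha₁
    heq₁ ha₂ heq₂
end

section
/- Let β > 0, δ > 0, ρ > 0, and let u : ℝ → ℝ be twice continuously differentiable with u(0) = 0, u'(x) > 0 for x ∈ [0, W), u'(W) = 0, and u''(x) < 0 for x ∈ [0, W]. Then for every θ ∈ (0, 1] there exists a unique a*(θ) ∈ (0, W) satisfying u(a)/u'(a) − a = (ρ + δ)/(β·θ), and the resulting best-response function θ ↦ a*(θ) is strictly decreasing on (0, 1]. -/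
/-! The map `g a = u a / u' a - a` has derivative `-u a * u'' a / u' a ^ 2`, which is positive on
`(0, W)` because `u` is positive there (it increases from `u 0 = 0`) and strictly concave.
Moreover `g 0 = 0` and `g a → ∞` as `a → W⁻`, since `u' a ↓ u' W = 0` while `u a → u W > 0`.
So `g` is a strictly increasing bijection of `[0, W)` onto `[0, ∞)`: each positive level
`(ρ + δ)/(β θ)` has exactly one preimage in `(0, W)`, and this level decreases in `θ`. -/

open Set Filter Topology

/-- The left-hand side of the first-order condition `u a / u' a - a = (ρ + δ) / (β θ)` for
maximizing `a ↦ u a / (ρ + δ + β θ a)`. -/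
noncomputable def focLHS (u : ℝ → ℝ) (a : ℝ) : ℝ := u a / deriv u a - a

theorem ContinuousOn.surjOn_Ioi_of_tendsto_nhdsLT {α δ : Type*}
    [ConditionallyCompleteLinearOrder α] [TopologicalSpace α] [OrderTopology α] [DenselyOrdered α]
    [LinearOrder δ] [TopologicalSpace δ] [OrderClosedTopology δ] [NoMaxOrder δ]
    {f : α → δ} {a b : α} (hab : a < b) (hf : ContinuousOn f (Ico a b))
    (hb : Tendsto f (𝓝[<] b) atTop) : SurjOn f (Ioo a b) (Ioi (f a)) := by
  intro c hc
  have := nhdsLT_neBot_of_exists_lt ⟨a, hab⟩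
  obtain ⟨x, hcx, hx⟩ := ((hb.eventually_gt_atTop c).and (Ioo_mem_nhdsLT hab)).exists
  obtain ⟨y, hy, rfl⟩ := intermediate_value_Ioo hx.1.le
    (hf.mono (Icc_subset_Ico_right hx.2)) ⟨hc, hcx⟩
  exact ⟨y, Ioo_subset_Ioo_right hx.2.le hy, rfl⟩

theorem apply_lt_of_deriv_pos {f : ℝ → ℝ} {a b x : ℝ} (hf : ContinuousOn f (Icc a b))
    (hf' : ∀ y ∈ Ioo a b, 0 < deriv f y) (hx : x ∈ Ioc a b) : f a < f x :=
  strictMonoOn_of_deriv_pos (convex_Icc a b) hf (by rwa [interior_Icc])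
    (left_mem_Icc.2 (hx.1.trans_le hx.2).le) (Ioc_subset_Icc_self hx) hx.1

section focLHS

variable {u : ℝ → ℝ}

theorem continuousOn_focLHS (hu : ContDiff ℝ 1 u) {s : Set ℝ} (hu' : ∀ x ∈ s, deriv u x ≠ 0) :
    ContinuousOn (focLHS u) s :=
  (hu.continuous.continuousOn.div (hu.continuous_deriv le_rfl).continuousOn hu').sub
    continuousOn_id

theorem hasDerivAt_focLHS {a : ℝ} (hu : DifferentiableAt ℝ u a)
    (hu' : DifferentiableAt ℝ (deriv u) a) (ha : deriv u a ≠ 0) :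
    HasDerivAt (focLHS u) (-(u a * deriv (deriv u) a) / deriv u a ^ 2) a := by
  refine ((hu.hasDerivAt.div hu'.hasDerivAt ha).sub (hasDerivAt_id' a)).congr_deriv ?_
  field_simp
  ring

theorem strictMonoOn_focLHS (hu : ContDiff ℝ 2 u) {D : Set ℝ} (hD : Convex ℝ D)
    (hu' : ∀ x ∈ D, deriv u x ≠ 0) (huu'' : ∀ x ∈ interior D, u x * deriv (deriv u) x < 0) :
    StrictMonoOn (focLHS u) D := by
  refine strictMonoOn_of_deriv_pos hD (continuousOn_focLHS (hu.of_le one_le_two) hu') ?_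
  intro x hx
  have hx' : deriv u x ≠ 0 := hu' x (interior_subset hx)
  rw [(hasDerivAt_focLHS (hu.differentiable two_ne_zero x) (hu.differentiable_deriv_two x)
    hx').deriv]
  exact div_pos (neg_pos.2 (huu'' x hx)) (sq_pos_of_ne_zero hx')

theorem tendsto_focLHS_nhdsLT {W : ℝ} (hu : ContinuousAt u W) (hu' : ContinuousAt (deriv u) W)
    (huW : 0 < u W) (hu'W : deriv u W = 0) (hu'_pos : ∀ᶠ x in 𝓝[<] W, 0 < deriv u x) :
    Tendsto (focLHS u) (𝓝[<] W) atTop := by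
  have h_deriv : Tendsto (deriv u) (𝓝[<] W) (𝓝[>] 0) :=
    tendsto_nhdsWithin_iff.2 ⟨hu'W ▸ hu'.tendsto.mono_left nhdsWithin_le_nhds, hu'_pos⟩
  have h_ratio : Tendsto (fun x => u x / deriv u x) (𝓝[<] W) atTop :=
    (hu.tendsto.mono_left nhdsWithin_le_nhds).pos_mul_atTop huW
      (tendsto_inv_nhdsGT_zero.comp h_deriv)
  exact (h_ratio.atTop_add (tendsto_neg W |>.mono_left nhdsWithin_le_nhds)).congr fun x =>
    (sub_eq_add_neg _ _).symm

end focLHS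

/-- **Existence, uniqueness and monotonicity of the best response.**
For every infection level `θ ∈ (0, 1]` there is a unique `a*(θ) ∈ (0, W)`
satisfying `u(a)/u'(a) − a = (ρ + δ)/(β·θ)`, and the best-response map
`θ ↦ a*(θ)` is strictly decreasing on `(0, 1]`. -/
theorem best_response_exists_unique_and_decreasing
    (β δ ρ W : ℝ) (hβ : 0 < β) (hδ : 0 < δ) (hρ : 0 < ρ) (hW : 0 < W)
    (u : ℝ → ℝ) (hu : ContDiff ℝ 2 u) (hu0 : u 0 = 0)
    (hu' : ∀ x : ℝ, 0 ≤ x → x < W → 0 < deriv u x) (huW : deriv u W = 0)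
    (hu'' : ∀ x : ℝ, 0 ≤ x → x ≤ W → deriv (deriv u) x < 0) :
    (∀ θ ∈ Set.Ioc (0 : ℝ) 1, ∃! a : ℝ, a ∈ Set.Ioo 0 W ∧
      u a / deriv u a - a = (ρ + δ) / (β * θ)) ∧
    (∀ θ₁ θ₂ a₁ a₂ : ℝ, 0 < θ₁ → θ₁ < θ₂ → θ₂ ≤ 1 →
      a₁ ∈ Set.Ioo 0 W → a₂ ∈ Set.Ioo 0 W →
      u a₁ / deriv u a₁ - a₁ = (ρ + δ) / (β * θ₁) →
      u a₂ / deriv u a₂ - a₂ = (ρ + δ) / (β * θ₂) →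
      a₂ < a₁) := by
  have hu'_pos : ∀ x ∈ Ico 0 W, 0 < deriv u x := fun x hx => hu' x hx.1 hx.2
  have hu_pos : ∀ x ∈ Ioc 0 W, 0 < u x := fun x hx => hu0 ▸
    apply_lt_of_deriv_pos hu.continuous.continuousOn (fun y hy => hu' y hy.1.le hy.2) hx
  have h_mono : StrictMonoOn (focLHS u) (Ico 0 W) := by
    refine strictMonoOn_focLHS hu (convex_Ico 0 W) (fun x hx => (hu'_pos x hx).ne') ?_
    rw [interior_Ico]
    exact fun x hx => mul_neg_of_pos_of_neg (hu_pos x (Ioo_subset_Ioc_self hx))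
      (hu'' x hx.1.le hx.2.le)
  have h_tendsto : Tendsto (focLHS u) (𝓝[<] W) atTop :=
    tendsto_focLHS_nhdsLT hu.continuous.continuousAt
      (hu.continuous_deriv one_le_two).continuousAt (hu_pos W ⟨hW, le_rfl⟩) huW
      (mem_of_superset (Ioo_mem_nhdsLT hW) fun x hx => hu'_pos x (Ioo_subset_Ico_self hx))
  have h_surj : SurjOn (focLHS u) (Ioo 0 W) (Ioi 0) := by
    simpa [focLHS, hu0] using (continuousOn_focLHS (hu.of_le one_le_two)
      fun x hx => (hu'_pos x hx).ne').surjOn_Ioi_of_tendsto_nhdsLT hW h_tendsto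
  refine ⟨fun θ ⟨hθ, _⟩ => ?_, fun θ₁ θ₂ a₁ a₂ hθ₁ hθ₁₂ _ ha₁ ha₂ h₁ h₂ => ?_⟩
  · obtain ⟨a, ha, hfa⟩ := h_surj (show 0 < (ρ + δ) / (β * θ) by positivity)
    exact ⟨a, ⟨ha, hfa⟩, fun b hb => h_mono.injOn (Ioo_subset_Ico_self hb.1)
      (Ioo_subset_Ico_self ha) (hb.2.trans hfa.symm)⟩
  · rw [← h_mono.lt_iff_lt (Ioo_subset_Ico_self ha₂) (Ioo_subset_Ico_self ha₁)]
    show u a₂ / deriv u a₂ - a₂ < u a₁ / deriv u a₁ - a₁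
    rw [h₁, h₂]
    gcongr
end

section
/- Let β > 0, δ > 0, ρ > 0, and let u : ℝ → ℝ be twice continuously differentiable with u(0) = 0, u'(x) > 0 for x ∈ [0, W), u'(W) = 0, u''(x) < 0 for x ∈ [0, W], and W > δ/β. Let a* : (0, 1] → (0, W) be the best-response function, i.e., for each θ, u(a*(θ))/u'(a*(θ)) − a*(θ) = (ρ + δ)/(β·θ). Then: (i) there exists a unique θ* ∈ (0, 1) with (1 − θ*)·β·a*(θ*) = δ, and a*(θ*) equals the conjectural-equilibrium degree a^CE (the unique solution in (δ/β, W) of u(a)/u'(a) − a = (ρ + δ)/(β − δ/a)); (ii) every differentiable f : [0, ∞) → (0, 1) satisfying the best-response dynamics f'(t) = f(t)·((1 − f(t))·β·a*(f(t)) − δ) with f(0) ∈ (0, 1) converges to θ* as t → ∞. -/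
/-!
Write `g a = u a / u' a - a`. Since `(u - a u')' = -a u'' > 0` and `u(0) = 0`, the numerator of
`g = (u - a u') / u'` is positive and increasing while `u'` is positive and decreasing, so `g` is
strictly increasing on `(0, W)`. Hence the best response `a*`, defined by `g (a* θ) = (ρ + δ) / (β θ)`,
is strictly decreasing, and so is `F θ = (1 - θ) β a*(θ)`. The conjectural equilibrium gives the
root `θ^CE = 1 - δ / (β a^CE)` of `F θ = δ`, unique by monotonicity of `F`.

For the dynamics `θ' = θ (F θ - δ)`, the field points towards `θ^CE`, uniformly on compact intervals
avoiding it. Thus `(θ - θ^CE)²` is a Lyapunov function: it is non-increasing, the trajectory never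
crosses `θ^CE`, and while it stays at distance `≥ r` from `θ^CE` the Lyapunov function decreases at a
fixed positive rate, which cannot go on forever.
-/

open Set Filter Topology

def IsUniformlyInward (φ : ℝ → ℝ) (I : Set ℝ) (θ : ℝ) : Prop :=
  ∀ a ∈ I, ∀ b ∈ I, θ ∉ Icc a b → ∃ c > 0, ∀ x ∈ Icc a b, (x - θ) * φ x ≤ -c

namespace IsUniformlyInward

variable {φ : ℝ → ℝ} {I : Set ℝ} {θ : ℝ}

theorem mul_sub_nonpos (h : IsUniformlyInward φ I θ) {x : ℝ} (hx : x ∈ I) :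
    (x - θ) * φ x ≤ 0 := by
  rcases eq_or_ne x θ with rfl | hxθ
  · simp
  obtain ⟨c, hc, hxc⟩ := h x hx x hx (by simpa [Icc_self] using hxθ.symm)
  linarith [hxc x ⟨le_rfl, le_rfl⟩]

end IsUniformlyInward

theorem mem_uIcc_of_sq_sub_le {x y θ : ℝ} (h : (y - θ) ^ 2 ≤ (x - θ) ^ 2)
    (hθ : θ ∉ uIcc x y) : y ∈ uIcc x θ := by
  simp only [mem_uIcc, not_or, not_and_or, not_le] at hθ ⊢
  rcases hθ with ⟨h1 | h1, h2 | h2⟩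
  · exact Or.inr ⟨h2.le, by nlinarith⟩
  · linarith
  · linarith
  · exact Or.inl ⟨by nlinarith, h1.le⟩

section AutonomousODE

variable {f φ : ℝ → ℝ} {θ : ℝ} (hf : ∀ t, 0 ≤ t → HasDerivAt f (φ (f t)) t)
include hf

theorem sq_sub_sub_sq_le {C : ℝ} (hC : ∀ t, 0 ≤ t → 2 * ((f t - θ) * φ (f t)) ≤ C)
    {s t : ℝ} (hs : 0 ≤ s) (hst : s ≤ t) :
    (f t - θ) ^ 2 - (f s - θ) ^ 2 ≤ C * (t - s) := by
  have hV : ∀ t, 0 ≤ t → HasDerivAt (fun t => (f t - θ) ^ 2) (2 * ((f t - θ) * φ (f t))) t :=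
    fun t ht => by simpa [mul_assoc] using ((hf t ht).sub_const θ).fun_pow 2
  refine (convex_Ici 0).image_sub_le_mul_sub_of_deriv_le
    (fun t ht => (hV t ht).continuousAt.continuousWithinAt)
    (fun t ht => (hV t (interior_subset ht)).differentiableAt.differentiableWithinAt)
    (fun t ht => ?_) s hs t (hs.trans hst) hst
  rw [(hV t (interior_subset ht)).deriv]
  exact hC t (interior_subset ht)

variable {I : Set ℝ} (hI : IsUniformlyInward φ I θ) (hfI : ∀ t, 0 ≤ t → f t ∈ I)
include hI hfI

theorem sq_sub_le_sq_sub {s t : ℝ} (hs : 0 ≤ s) (hst : s ≤ t) :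
    (f t - θ) ^ 2 ≤ (f s - θ) ^ 2 := by
  have := sq_sub_sub_sq_le hf (θ := θ) (C := 0)
    (fun t ht => by linarith [hI.mul_sub_nonpos (hfI t ht)]) hs hst
  linarith

theorem mem_uIcc_of_isUniformlyInward {t : ℝ} (ht : 0 ≤ t) : f t ∈ uIcc (f 0) θ := by
  have hdecay := sq_sub_le_sq_sub hf hI hfI le_rfl ht
  by_cases hθ : θ ∈ uIcc (f 0) (f t)
  · have hcont : ContinuousOn f (uIcc 0 t) := fun s hs =>
      (hf s (by rw [uIcc_of_le ht] at hs; exact hs.1)).continuousAt.continuousWithinAt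
    obtain ⟨s, hs, hfs⟩ := intermediate_value_uIcc hcont hθ
    rw [uIcc_of_le ht] at hs
    have hft : (f t - θ) ^ 2 ≤ 0 := by simpa [hfs] using sq_sub_le_sq_sub hf hI hfI hs.1 hs.2
    rw [sub_eq_zero.mp (pow_eq_zero_iff two_ne_zero |>.mp (le_antisymm hft (sq_nonneg _)))]
    exact right_mem_uIcc
  · exact mem_uIcc_of_sq_sub_le hdecay hθ

theorem exists_abs_sub_lt [I.OrdConnected] (hθ : θ ∈ I) {r : ℝ} (hr : 0 < r) :
    ∃ T, 0 ≤ T ∧ |f T - θ| < r := by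
  by_contra! hfar
  obtain ⟨a, ha, b, hb, hθab, hab⟩ :
      ∃ a ∈ I, ∃ b ∈ I, θ ∉ Icc a b ∧ ∀ t, 0 ≤ t → f t ∈ Icc a b := by
    have hmem := fun t (ht : 0 ≤ t) => mem_uIcc_of_isUniformlyInward hf hI hfI ht
    rcases le_total (f 0) θ with h0θ | hθ0
    · have hfar' : ∀ t, 0 ≤ t → f t ∈ Icc (f 0) (θ - r) := fun t ht => by
        have hft := hmem t ht
        rw [uIcc_of_le h0θ] at hft
        have := hfar t ht
        rw [abs_sub_comm, abs_of_nonneg (sub_nonneg.2 hft.2)] at this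
        exact ⟨hft.1, by linarith⟩
      exact ⟨f 0, hfI 0 le_rfl, θ - r,
        Set.Icc_subset I (hfI 0 le_rfl) hθ ⟨(hfar' 0 le_rfl).2, by linarith⟩,
        fun h => by linarith [h.2], hfar'⟩
    · have hfar' : ∀ t, 0 ≤ t → f t ∈ Icc (θ + r) (f 0) := fun t ht => by
        have hft := hmem t ht
        rw [uIcc_of_ge hθ0] at hft
        have := hfar t ht
        rw [abs_of_nonneg (sub_nonneg.2 hft.1)] at this
        exact ⟨by linarith, hft.2⟩
      exact ⟨θ + r, Set.Icc_subset I hθ (hfI 0 le_rfl) ⟨by linarith, (hfar' 0 le_rfl).1⟩,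
        f 0, hfI 0 le_rfl, fun h => by linarith [h.1], hfar'⟩
  obtain ⟨c, hc, hφc⟩ := hI a ha b hb hθab
  set T := (f 0 - θ) ^ 2 / (2 * c) + 1
  have hT : 2 * c * T = (f 0 - θ) ^ 2 + 2 * c := by simp only [T]; field_simp
  have hdecay := sq_sub_sub_sq_le hf (θ := θ) (C := -(2 * c))
    (fun t ht => by linarith [hφc (f t) (hab t ht)]) le_rfl (by positivity : 0 ≤ T)
  linarith [sq_nonneg (f T - θ)]

theorem tendsto_of_isUniformlyInward [I.OrdConnected] (hθ : θ ∈ I) : Tendsto f atTop (𝓝 θ) := by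
  refine Metric.tendsto_atTop.2 fun r hr => ?_
  obtain ⟨T, hT, hfT⟩ := exists_abs_sub_lt hf hI hfI hθ hr
  refine ⟨T, fun t ht => ?_⟩
  have := sq_sub_le_sq_sub hf hI hfI hT ht
  rw [sq_le_sq] at this
  rw [Real.dist_eq]
  linarith

end AutonomousODE

theorem isUniformlyInward_mul_sub {F : ℝ → ℝ} {I : Set ℝ} [I.OrdConnected] {θ δ : ℝ}
    (hI : ∀ x ∈ I, 0 < x) (hF : StrictAntiOn F I) (hθ : θ ∈ I) (hFθ : F θ = δ) :
    IsUniformlyInward (fun x => x * (F x - δ)) I θ := by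
  intro a ha b hb hθab
  have ha0 := hI a ha
  simp only [mem_Icc, not_and_or, not_le] at hθab
  subst hFθ
  rcases hθab with hθa | hbθ
  · have hFa : F a < F θ := hF hθ ha hθa
    refine ⟨(a - θ) * (a * (F θ - F a)), by positivity, fun x ⟨hax, hxb⟩ => ?_⟩
    have hFx : F x ≤ F a := hF.antitoneOn ha (Set.Icc_subset I ha hb ⟨hax, hxb⟩) hax
    have := mul_le_mul (sub_le_sub_right hax θ)
      (mul_le_mul hax (sub_le_sub_left hFx _) (sub_pos.2 hFa).le (by linarith))
      (by positivity) (by linarith)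
    linarith
  · have hFb : F θ < F b := hF hb hθ hbθ
    refine ⟨(θ - b) * (a * (F b - F θ)), by positivity, fun x ⟨hax, hxb⟩ => ?_⟩
    have hFx : F b ≤ F x := hF.antitoneOn (Set.Icc_subset I ha hb ⟨hax, hxb⟩) hb hxb
    have := mul_le_mul (sub_le_sub_left hxb θ)
      (mul_le_mul hax (sub_le_sub_right hFx _) (sub_pos.2 hFb).le (by linarith))
      (by positivity) (by linarith)
    linarith

section ConcaveUtility

variable {u : ℝ → ℝ} {W : ℝ} (hu : ContDiff ℝ 2 u)
  (hu'' : ∀ x, 0 ≤ x → x ≤ W → deriv (deriv u) x < 0)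
include hu hu''

theorem strictAntiOn_deriv_of_deriv_deriv_neg : StrictAntiOn (deriv u) (Icc 0 W) :=
  strictAntiOn_of_deriv_neg (convex_Icc 0 W) (hu.continuous_deriv one_le_two).continuousOn
    fun x hx => by rw [interior_Icc] at hx; exact hu'' x hx.1.le hx.2.le

theorem strictMonoOn_sub_mul_deriv : StrictMonoOn (fun x => u x - x * deriv u x) (Icc 0 W) := by
  have hu1 : Differentiable ℝ (deriv u) := hu.differentiable_deriv_two
  have hd : ∀ x, HasDerivAt (fun x => u x - x * deriv u x) (-(x * deriv (deriv u) x)) x :=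
    fun x => (((hu.differentiable two_ne_zero x).hasDerivAt).fun_sub
      ((hasDerivAt_id' x).fun_mul (hu1 x).hasDerivAt)).congr_deriv (by ring)
  refine strictMonoOn_of_deriv_pos (convex_Icc 0 W)
    (fun x _ => (hd x).continuousAt.continuousWithinAt) fun x hx => ?_
  rw [interior_Icc] at hx
  rw [(hd x).deriv, neg_pos]
  exact mul_neg_of_pos_of_neg hx.1 (hu'' x hx.1.le hx.2.le)

theorem strictMonoOn_div_deriv_sub (hu0 : u 0 = 0)
    (hu' : ∀ x, 0 ≤ x → x < W → 0 < deriv u x) :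
    StrictMonoOn (fun a => u a / deriv u a - a) (Ioo 0 W) := by
  intro a ha b hb hab
  have hua := hu' a ha.1.le ha.2
  have hub := hu' b hb.1.le hb.2
  have hh := strictMonoOn_sub_mul_deriv hu hu''
  have hha : 0 < u a - a * deriv u a := by
    simpa [hu0] using hh (left_mem_Icc.2 (ha.1.trans ha.2).le) (Ioo_subset_Icc_self ha) ha.1
  have hhab := hh (Ioo_subset_Icc_self ha) (Ioo_subset_Icc_self hb) hab
  have hu'ab := strictAntiOn_deriv_of_deriv_deriv_neg hu hu''
    (Ioo_subset_Icc_self ha) (Ioo_subset_Icc_self hb) hab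
  have hdiv : ∀ x, 0 < deriv u x → u x / deriv u x - x = (u x - x * deriv u x) / deriv u x :=
    fun x hx => by field_simp
  simp only [hdiv a hua, hdiv b hub]
  calc (u a - a * deriv u a) / deriv u a < (u b - b * deriv u b) / deriv u a :=
        div_lt_div_of_pos_right hhab hua
    _ < (u b - b * deriv u b) / deriv u b := div_lt_div_of_pos_left (hha.trans hhab) hub hu'ab

end ConcaveUtility

section BestResponse

variable {β δ ρ W : ℝ} {u astar : ℝ → ℝ}
  (hastar : ∀ θ : ℝ, 0 < θ → θ ≤ 1 → astar θ ∈ Ioo 0 W ∧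
      u (astar θ) / deriv u (astar θ) - astar θ = (ρ + δ) / (β * θ))
  (hg : StrictMonoOn (fun a => u a / deriv u a - a) (Ioo 0 W))
include hastar hg

theorem strictAntiOn_of_div_deriv_sub_eq (hβ : 0 < β) (hρδ : 0 < ρ + δ) :
    StrictAntiOn astar (Ioc 0 1) := by
  intro θ₁ h₁ θ₂ h₂ h₁₂
  obtain ⟨ha₁, hg₁⟩ := hastar θ₁ h₁.1 h₁.2
  obtain ⟨ha₂, hg₂⟩ := hastar θ₂ h₂.1 h₂.2
  rw [← hg.lt_iff_lt ha₂ ha₁]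
  simp only [hg₁, hg₂]
  exact div_lt_div_of_pos_left hρδ (mul_pos hβ h₁.1) (mul_lt_mul_of_pos_left h₁₂ hβ)

theorem exists_fixedPoint_of_conjecturalEquilibrium (hβ : 0 < β) (hδ : 0 < δ)
    {aCE : ℝ} (haCE : aCE ∈ Ioo (δ / β) W)
    (heqCE : u aCE / deriv u aCE - aCE = (ρ + δ) / (β - δ / aCE)) :
    ∃ θ ∈ Ioo (0 : ℝ) 1, (1 - θ) * β * astar θ = δ ∧ astar θ = aCE := by
  have haCE0 : 0 < aCE := (div_pos hδ hβ).trans haCE.1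
  have hβa : δ < β * aCE := by have := (div_lt_iff₀ hβ).1 haCE.1; linarith
  have hθ : 1 - δ / (β * aCE) ∈ Ioo (0 : ℝ) 1 :=
    ⟨sub_pos.2 ((div_lt_one (by positivity)).2 hβa), sub_lt_self 1 (by positivity)⟩
  have hβθ : β * (1 - δ / (β * aCE)) = β - δ / aCE := by field_simp
  obtain ⟨ha, hga⟩ := hastar _ hθ.1 hθ.2.le
  have hastarCE : astar (1 - δ / (β * aCE)) = aCE :=
    hg.injOn ha ⟨haCE0, haCE.2⟩ (by rw [hga, hβθ, heqCE])
  refine ⟨_, hθ, ?_, hastarCE⟩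
  rw [hastarCE]
  field_simp
  ring

end BestResponse

theorem strictAntiOn_one_sub_mul_mul {β : ℝ} {a : ℝ → ℝ} (hβ : 0 < β)
    (ha : StrictAntiOn a (Ioc 0 1)) (ha0 : ∀ θ ∈ Ioc (0 : ℝ) 1, 0 < a θ) :
    StrictAntiOn (fun θ => (1 - θ) * β * a θ) (Ioc 0 1) := by
  intro θ₁ h₁ θ₂ h₂ h₁₂
  have hdrop : 0 < β * ((1 - θ₁) * (a θ₁ - a θ₂)) :=
    mul_pos hβ (mul_pos (by linarith [h₂.2]) (sub_pos.2 (ha h₁ h₂ h₁₂)))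
  have hshift : 0 < β * ((θ₂ - θ₁) * a θ₂) := mul_pos hβ (mul_pos (sub_pos.2 h₁₂) (ha0 θ₂ h₂))
  simp only
  linarith

theorem best_response_dynamics_converges_general
    (β δ ρ W : ℝ) (hβ : 0 < β) (hδ : 0 < δ) (hρ : 0 < ρ)
    (u : ℝ → ℝ) (hu : ContDiff ℝ 2 u) (hu0 : u 0 = 0)
    (hu' : ∀ x : ℝ, 0 ≤ x → x < W → 0 < deriv u x)
    (hu'' : ∀ x : ℝ, 0 ≤ x → x ≤ W → deriv (deriv u) x < 0)
    (astar : ℝ → ℝ)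
    (hastar : ∀ θ : ℝ, 0 < θ → θ ≤ 1 → astar θ ∈ Set.Ioo 0 W ∧
      u (astar θ) / deriv u (astar θ) - astar θ = (ρ + δ) / (β * θ))
    (aCE : ℝ) (haCE : aCE ∈ Set.Ioo (δ / β) W)
    (heqCE : u aCE / deriv u aCE - aCE = (ρ + δ) / (β - δ / aCE)) :
    (∃! θs : ℝ, θs ∈ Set.Ioo (0 : ℝ) 1 ∧ (1 - θs) * β * astar θs = δ) ∧
    (∀ θs ∈ Set.Ioo (0 : ℝ) 1, (1 - θs) * β * astar θs = δ →
      astar θs = aCE ∧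
      (∀ f : ℝ → ℝ, (∀ t : ℝ, 0 ≤ t → f t ∈ Set.Ioo (0 : ℝ) 1) →
        (∀ t : ℝ, 0 ≤ t →
          HasDerivAt f (f t * ((1 - f t) * β * astar (f t) - δ)) t) →
        f 0 ∈ Set.Ioo (0 : ℝ) 1 →
        Filter.Tendsto f Filter.atTop (nhds θs))) := by
  have hg := strictMonoOn_div_deriv_sub hu hu'' hu0 hu'
  have hF : StrictAntiOn (fun θ => (1 - θ) * β * astar θ) (Ioc 0 1) :=
    strictAntiOn_one_sub_mul_mul hβ (strictAntiOn_of_div_deriv_sub_eq hastar hg hβ (by linarith))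
      fun θ hθ => (hastar θ hθ.1 hθ.2).1.1
  obtain ⟨θCE, hθCE, hfix, hastarCE⟩ :=
    exists_fixedPoint_of_conjecturalEquilibrium hastar hg hβ hδ haCE heqCE
  have huniq : ∀ θ ∈ Ioo (0 : ℝ) 1, (1 - θ) * β * astar θ = δ → θ = θCE := fun θ hθ hθfix =>
    hF.injOn (Ioo_subset_Ioc_self hθ) (Ioo_subset_Ioc_self hθCE) (hθfix.trans hfix.symm)
  have hinward : IsUniformlyInward (fun x => x * ((1 - x) * β * astar x - δ)) (Ioo 0 1) θCE :=
    isUniformlyInward_mul_sub (fun x hx => hx.1) (hF.mono Ioo_subset_Ioc_self) hθCE hfix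
  refine ⟨⟨θCE, ⟨hθCE, hfix⟩, fun θ h => huniq θ h.1 h.2⟩, fun θs hθs hθsfix => ?_⟩
  rw [huniq θs hθs hθsfix]
  exact ⟨hastarCE, fun f hf hf' _ => tendsto_of_isUniformlyInward hf' hinward hf hθCE⟩

/-- **Convergence of the best-response dynamics to the conjectural equilibrium.**
Let `a* : (0,1] → (0,W)` be the best-response function and `a^CE` the
conjectural-equilibrium degree.  Then (i) there is a unique `θ* ∈ (0,1)` with
`(1 − θ*)·β·a*(θ*) = δ`, and at this `θ*` one has `a*(θ*) = a^CE`;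
(ii) every solution `f` of the best-response dynamics
`f' = f·((1 − f)·β·a*(f) − δ)` with values in `(0,1)` converges to `θ*`. -/
theorem best_response_dynamics_converges
    (β δ ρ W : ℝ) (hβ : 0 < β) (hδ : 0 < δ) (hρ : 0 < ρ) (hW : δ / β < W)
    (u : ℝ → ℝ) (hu : ContDiff ℝ 2 u) (hu0 : u 0 = 0)
    (hu' : ∀ x : ℝ, 0 ≤ x → x < W → 0 < deriv u x) (huW : deriv u W = 0)
    (hu'' : ∀ x : ℝ, 0 ≤ x → x ≤ W → deriv (deriv u) x < 0)
    (astar : ℝ → ℝ)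
    (hastar : ∀ θ : ℝ, 0 < θ → θ ≤ 1 → astar θ ∈ Set.Ioo 0 W ∧
      u (astar θ) / deriv u (astar θ) - astar θ = (ρ + δ) / (β * θ))
    (aCE : ℝ) (haCE : aCE ∈ Set.Ioo (δ / β) W)
    (heqCE : u aCE / deriv u aCE - aCE = (ρ + δ) / (β - δ / aCE)) :
    (∃! θs : ℝ, θs ∈ Set.Ioo (0 : ℝ) 1 ∧ (1 - θs) * β * astar θs = δ) ∧
    (∀ θs ∈ Set.Ioo (0 : ℝ) 1, (1 - θs) * β * astar θs = δ →
      astar θs = aCE ∧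
      (∀ f : ℝ → ℝ, (∀ t : ℝ, 0 ≤ t → f t ∈ Set.Ioo (0 : ℝ) 1) →
        (∀ t : ℝ, 0 ≤ t →
          HasDerivAt f (f t * ((1 - f t) * β * astar (f t) - δ)) t) →
        f 0 ∈ Set.Ioo (0 : ℝ) 1 →
        Filter.Tendsto f Filter.atTop (nhds θs))) :=
  best_response_dynamics_converges_general β δ ρ W hβ hδ hρ u hu hu0 hu' hu'' astar hastar aCE haCE
    heqCE
end

section
/- Let K be a finite nonempty index set, β > 0, and for each k ∈ K let w_k > 0 with ∑_{k∈K} w_k = 1, δ_k > 0, and a_k ≥ 0. Then: (i) if β·∑_{k∈K} w_k·a_k/δ_k > 1, there exists a unique θ ∈ (0, 1) satisfying ∑_{k∈K} w_k·(β·a_k/δ_k)/(θ·β·a_k/δ_k + 1) = 1; (ii) if β·∑_{k∈K} w_k·a_k/δ_k ≤ 1, then no θ ∈ (0, 1) satisfies this equation, i.e., the only stationary infection level is θ = 0. -/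
/-! Writing `cₖ = β·aₖ/δₖ ≥ 0`, the left-hand side of the fixed-point equation is
`F θ = ∑ₖ wₖ·cₖ/(θ·cₖ + 1)`. It is continuous on `[0, ∞)`, satisfies
`F 0 = β·∑ₖ wₖ·aₖ/δₖ` and `F 1 < ∑ₖ wₖ = 1`, and it vanishes identically unless some `cₖ > 0`,
in which case it is strictly decreasing. So the intermediate value theorem gives a root of
`F θ = 1` in `(0, 1)` when `F 0 > 1`, monotonicity makes it unique, and when `F 0 ≤ 1` there is
no root with `θ > 0`. -/

open Finset Set

section StationaryMap

variable {K : Type*} [Fintype K]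

lemma antitoneOn_div_mul_add_one {c : ℝ} (hc : 0 ≤ c) :
    AntitoneOn (fun θ : ℝ => c / (θ * c + 1)) (Ici 0) := by
  intro θ₁ h₁ θ₂ _ h₁₂
  have h₁c : 0 ≤ θ₁ * c := mul_nonneg h₁ hc
  exact div_le_div_of_nonneg_left hc (by linarith) (by nlinarith)

lemma strictAntiOn_div_mul_add_one {c : ℝ} (hc : 0 < c) :
    StrictAntiOn (fun θ : ℝ => c / (θ * c + 1)) (Ici 0) := by
  intro θ₁ h₁ θ₂ _ h₁₂
  have h₁c : 0 ≤ θ₁ * c := mul_nonneg h₁ hc.le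
  exact div_lt_div_of_pos_left hc (by linarith) (by nlinarith)

noncomputable def stationaryMap (w c : K → ℝ) (θ : ℝ) : ℝ :=
  ∑ k, w k * (c k / (θ * c k + 1))

variable {w c : K → ℝ}

lemma stationaryMap_zero : stationaryMap w c 0 = ∑ k, w k * c k := by
  simp [stationaryMap]

lemma stationaryMap_one_lt_one (hw : ∀ k, 0 < w k) (hsum : ∑ k, w k = 1)
    (hc : ∀ k, 0 ≤ c k) : stationaryMap w c 1 < 1 := by
  have hK : (univ : Finset K).Nonempty :=
    nonempty_of_sum_ne_zero (hsum ▸ one_ne_zero)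
  refine (sum_lt_sum_of_nonempty hK fun k _ => ?_).trans_eq hsum
  have hfrac : c k / (1 * c k + 1) < 1 := by
    rw [div_lt_one (by linarith [hc k])]
    linarith
  simpa using mul_lt_mul_of_pos_left hfrac (hw k)

lemma continuousOn_stationaryMap (hc : ∀ k, 0 ≤ c k) :
    ContinuousOn (stationaryMap w c) (Ici 0) := by
  refine continuousOn_finsetSum _ fun k _ => continuousOn_const.mul ?_
  refine continuousOn_const.div (by fun_prop) fun θ hθ => ?_
  have : 0 ≤ θ * c k := mul_nonneg hθ (hc k)
  positivity

lemma exists_pos_of_stationaryMap_ne_zero (hc : ∀ k, 0 ≤ c k) {θ : ℝ}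
    (hθ : stationaryMap w c θ ≠ 0) : ∃ k, 0 < c k := by
  by_contra! hnpos
  have hzero : ∀ k, c k = 0 := fun k => le_antisymm (hnpos k) (hc k)
  simp [stationaryMap, hzero] at hθ

lemma strictAntiOn_stationaryMap (hw : ∀ k, 0 < w k) (hc : ∀ k, 0 ≤ c k)
    (hpos : ∃ k, 0 < c k) : StrictAntiOn (stationaryMap w c) (Ici 0) := by
  obtain ⟨k₀, hk₀⟩ := hpos
  intro θ₁ h₁ θ₂ h₂ h₁₂
  refine sum_lt_sum (fun k _ => ?_) ⟨k₀, mem_univ k₀, ?_⟩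
  · exact mul_le_mul_of_nonneg_left
      (antitoneOn_div_mul_add_one (hc k) h₁ h₂ h₁₂.le) (hw k).le
  · exact mul_lt_mul_of_pos_left (strictAntiOn_div_mul_add_one hk₀ h₁ h₂ h₁₂) (hw k₀)

theorem existsUnique_stationaryMap_eq_one (hw : ∀ k, 0 < w k) (hsum : ∑ k, w k = 1)
    (hc : ∀ k, 0 ≤ c k) (hsupercritical : 1 < ∑ k, w k * c k) :
    ∃! θ, θ ∈ Ioo (0 : ℝ) 1 ∧ stationaryMap w c θ = 1 := by
  rw [← stationaryMap_zero] at hsupercritical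
  have hanti := strictAntiOn_stationaryMap hw hc
    (exists_pos_of_stationaryMap_ne_zero hc (zero_lt_one.trans hsupercritical).ne')
  have hroot : (1 : ℝ) ∈ Ioo (stationaryMap w c 1) (stationaryMap w c 0) :=
    ⟨stationaryMap_one_lt_one hw hsum hc, hsupercritical⟩
  obtain ⟨θ, hθ, hθroot⟩ := intermediate_value_Ioo' zero_le_one
    ((continuousOn_stationaryMap hc).mono Icc_subset_Ici_self) hroot
  refine ⟨θ, ⟨hθ, hθroot⟩, fun θ' ⟨hθ', hθ'root⟩ => ?_⟩
  exact hanti.injOn (mem_Ici.2 hθ'.1.le) (mem_Ici.2 hθ.1.le) (hθ'root.trans hθroot.symm)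

theorem stationaryMap_ne_one (hw : ∀ k, 0 < w k) (hc : ∀ k, 0 ≤ c k)
    (hsubcritical : ∑ k, w k * c k ≤ 1) {θ : ℝ} (hθ : 0 < θ) : stationaryMap w c θ ≠ 1 := by
  intro hroot
  have hanti := strictAntiOn_stationaryMap hw hc
    (exists_pos_of_stationaryMap_ne_zero hc (ne_of_eq_of_ne hroot one_ne_zero))
  have := hanti (mem_Ici.2 le_rfl) (mem_Ici.2 hθ.le) hθ
  rw [stationaryMap_zero] at this
  linarith

end StationaryMap

theorem heterogeneous_stationary_infection_general
    (K : Type*) [Fintype K] (β : ℝ) (hβ : 0 < β)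
    (w δ a : K → ℝ)
    (hw : ∀ k, 0 < w k) (hsum : ∑ k, w k = 1)
    (hδ : ∀ k, 0 < δ k) (ha : ∀ k, 0 ≤ a k) :
    (1 < β * ∑ k, w k * a k / δ k →
      ∃! θ : ℝ, θ ∈ Set.Ioo (0 : ℝ) 1 ∧
        ∑ k, w k * ((β * a k / δ k) / (θ * (β * a k / δ k) + 1)) = 1) ∧
    (β * ∑ k, w k * a k / δ k ≤ 1 →
      ∀ θ ∈ Set.Ioo (0 : ℝ) 1,
        ∑ k, w k * ((β * a k / δ k) / (θ * (β * a k / δ k) + 1)) ≠ 1) := by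
  have hc : ∀ k, 0 ≤ β * a k / δ k := fun k =>
    div_nonneg (mul_nonneg hβ.le (ha k)) (hδ k).le
  have hthreshold : β * ∑ k, w k * a k / δ k = ∑ k, w k * (β * a k / δ k) := by
    rw [mul_sum]
    exact sum_congr rfl fun k _ => by ring
  rw [hthreshold]
  exact ⟨existsUnique_stationaryMap_eq_one hw hsum hc,
    fun hsub θ hθ => stationaryMap_ne_one hw hc hsub hθ.1⟩

/-- **Stationary infection level with heterogeneous agents.**
(i) If `β·∑ₖ wₖ·aₖ/δₖ > 1`, there is a unique `θ ∈ (0, 1)` satisfying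
`∑ₖ wₖ·(β·aₖ/δₖ)/(θ·β·aₖ/δₖ + 1) = 1`.
(ii) If `β·∑ₖ wₖ·aₖ/δₖ ≤ 1`, no `θ ∈ (0, 1)` satisfies this equation; the only
stationary infection level is `θ = 0`. -/
theorem heterogeneous_stationary_infection
    (K : Type*) [Fintype K] [Nonempty K] (β : ℝ) (hβ : 0 < β)
    (w δ a : K → ℝ)
    (hw : ∀ k, 0 < w k) (hsum : ∑ k, w k = 1)
    (hδ : ∀ k, 0 < δ k) (ha : ∀ k, 0 ≤ a k) :
    (1 < β * ∑ k, w k * a k / δ k →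
      ∃! θ : ℝ, θ ∈ Set.Ioo (0 : ℝ) 1 ∧
        ∑ k, w k * ((β * a k / δ k) / (θ * (β * a k / δ k) + 1)) = 1) ∧
    (β * ∑ k, w k * a k / δ k ≤ 1 →
      ∀ θ ∈ Set.Ioo (0 : ℝ) 1,
        ∑ k, w k * ((β * a k / δ k) / (θ * (β * a k / δ k) + 1)) ≠ 1) :=
  heterogeneous_stationary_infection_general K β hβ w δ a hw hsum hδ ha
end

section
/- Let K be a finite nonempty index set, β > 0, ρ > 0, and for each k ∈ K let w_k > 0 with ∑_{k∈K} w_k = 1 and δ_k > 0. Let b : ℝ → ℝ be twice continuously differentiable with b(0) = 0, b'(x) > 0 for x ∈ [0, W), b'(W) = 0, and b''(x) < 0 for x ∈ [0, W], and assume β·W·∑_{k∈K} w_k/δ_k > 1. Then: (i) for each θ ∈ (0, 1] and each k ∈ K there exists a unique a_k*(θ) ∈ (0, W) satisfying b(a)/b'(a) − a = (ρ + δ_k)/(β·θ), each map θ ↦ a_k*(θ) is strictly decreasing, and for fixed θ, a_k*(θ) is larger for larger δ_k; (ii) there exists a unique θ^CE ∈ (0, 1) satisfying ∑_{k∈K}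 w_k·(β·a_k*(θ^CE)/δ_k)/(θ^CE·β·a_k*(θ^CE)/δ_k + 1) = 1. In particular, β·∑_{k∈K} w_k·a_k*(θ^CE)/δ_k > 1, so the equilibrium strategy profile lies outside the extinction region and the infection never extinguishes. -/
/-!
The map `foc b a = b a / b' a - a` is a continuous strictly increasing bijection of `(0, W)` onto
`(0, ∞)`: monotonicity follows from the mean value theorem and the concavity of `b`, and the range
from `foc b 0 = 0` and `b' a → 0⁺` as `a → W`. So the best response
`aₖ*(θ) = foc⁻¹((ρ + δₖ)/(β θ))` exists, is unique, decreases in `θ`, increases in `δₖ`, is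
continuous, and tends to `W` as `θ → 0⁺`. The stationarity sum `S(θ)` is then continuous and
strictly decreasing on `(0, 1]`, with `S 1 < ∑ wₖ = 1` and `S(0⁺) = β W ∑ wₖ/δₖ > 1`, so it takes
the value `1` exactly once; and `x/(θx + 1) < x` turns `S(θ^CE) = 1` into `β ∑ wₖ aₖ/δₖ > 1`.
-/

open Set Filter Topology Function

section InvFunOn

variable {α β : Type*} [LinearOrder α] [LinearOrder β] [Nonempty α]
  {g : α → β} {s : Set α} {t : Set β}

theorem StrictMonoOn.strictMonoOn_invFunOn (hg : StrictMonoOn g s) (hst : SurjOn g s t) :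
    StrictMonoOn (invFunOn g s) t := by
  intro y₁ hy₁ y₂ hy₂ hlt
  obtain ⟨hx₁, hgx₁⟩ := invFunOn_pos (hst hy₁)
  obtain ⟨hx₂, hgx₂⟩ := invFunOn_pos (hst hy₂)
  rwa [← hg.lt_iff_lt hx₁ hx₂, hgx₁, hgx₂]

variable [TopologicalSpace α] [OrderTopology α] [DenselyOrdered α]

theorem StrictMonoOn.continuousOn_invFunOn [TopologicalSpace β] [OrderTopology β]
    (hg : StrictMonoOn g s) (hst : BijOn g s t) (hs : IsOpen s) (ht : IsOpen t) :
    ContinuousOn (invFunOn g s) t := by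
  intro y hy
  refine ((hg.strictMonoOn_invFunOn hst.surjOn).continuousAt_of_image_mem_nhds
    (ht.mem_nhds hy) ?_).continuousWithinAt
  rw [(BijOn.symm hst.invOn_invFunOn.symm hst).image_eq]
  exact hs.mem_nhds (hst.surjOn.mapsTo_invFunOn hy)

theorem StrictMonoOn.tendsto_invFunOn_atTop [NoMaxOrder β] {a b : α} {c : β} (hab : a < b)
    (hg : StrictMonoOn g (Ioo a b)) (hst : BijOn g (Ioo a b) (Ioi c)) :
    Tendsto (invFunOn g (Ioo a b)) atTop (𝓝 b) := by
  refine tendsto_order.2 ⟨fun x hx => ?_, fun x hx => ?_⟩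
  · obtain ⟨z, hxz, hzb⟩ := exists_between (max_lt hx hab)
    have hz : z ∈ Ioo a b := ⟨(le_max_right _ _).trans_lt hxz, hzb⟩
    filter_upwards [eventually_ge_atTop (g z)] with y hy
    calc x < z := (le_max_left _ _).trans_lt hxz
      _ = invFunOn g (Ioo a b) (g z) := (hst.invOn_invFunOn.1 hz).symm
      _ ≤ invFunOn g (Ioo a b) y := (hg.strictMonoOn_invFunOn hst.surjOn).monotoneOn
          (hst.mapsTo hz) ((hst.mapsTo hz).trans_le hy) hy
  · filter_upwards [eventually_gt_atTop c] with y hy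
    exact (hst.surjOn.mapsTo_invFunOn hy).2.trans hx

end InvFunOn

theorem existsUnique_eq_of_strictAntiOn_Ioc {f : ℝ → ℝ} {a b y L : ℝ} (hab : a < b)
    (hf : ContinuousOn f (Ioc a b)) (hanti : StrictAntiOn f (Ioc a b)) (hb : f b < y)
    (hlim : Tendsto f (𝓝[>] a) (𝓝 L)) (hL : y < L) :
    ∃! x, x ∈ Ioo a b ∧ f x = y := by
  obtain ⟨x₀, hyx₀, hx₀⟩ :=
    ((hlim.eventually (eventually_gt_nhds hL)).and (Ioo_mem_nhdsGT hab)).exists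
  obtain ⟨x, hx, hfx⟩ :=
    intermediate_value_Ioo' hx₀.2.le (hf.mono (Icc_subset_Ioc_left hx₀.1)) ⟨hb, hyx₀⟩
  have hxab : x ∈ Ioo a b := ⟨hx₀.1.trans hx.1, hx.2⟩
  exact ⟨x, ⟨hxab, hfx⟩, fun x' hx' =>
    hanti.injOn (Ioo_subset_Ioc_self hx'.1) (Ioo_subset_Ioc_self hxab) (hx'.2.trans hfx.symm)⟩

/-- Left-hand side of the first-order condition `b a / b' a - a = (ρ + δ) / (β θ)` for maximizing
`b a / (ρ + δ + β θ a)`. -/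
noncomputable def foc (b : ℝ → ℝ) (a : ℝ) : ℝ := b a / deriv b a - a

section Foc

variable {b : ℝ → ℝ} {W : ℝ}

theorem strictMonoOn_Icc_of_deriv_pos_Ico (hb : Continuous b)
    (hb' : ∀ x ∈ Ico 0 W, 0 < deriv b x) : StrictMonoOn b (Icc 0 W) :=
  strictMonoOn_of_deriv_pos (convex_Icc 0 W) hb.continuousOn fun x hx =>
    hb' x (Ioo_subset_Ico_self (by rwa [interior_Icc] at hx))

theorem foc_zero (hb0 : b 0 = 0) : foc b 0 = 0 := by
  simp [foc, hb0]

theorem strictMonoOn_foc (hb : Differentiable ℝ b) (hb0 : b 0 = 0)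
    (hb' : ∀ x ∈ Ico 0 W, 0 < deriv b x) (hb'' : StrictAntiOn (deriv b) (Ico 0 W)) :
    StrictMonoOn (foc b) (Ico 0 W) := by
  intro a₁ ha₁ a₂ ha₂ hlt
  have hd₁ := hb' a₁ ha₁
  have hd₂ := hb' a₂ ha₂
  have hba₁ : 0 ≤ b a₁ := hb0 ▸ (strictMonoOn_Icc_of_deriv_pos_Ico hb.continuous hb').monotoneOn
    ⟨le_rfl, ha₁.1.trans ha₁.2.le⟩ (Ico_subset_Icc_self ha₁) ha₁.1
  obtain ⟨ξ, hξ, hξslope⟩ :=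
    exists_deriv_eq_slope b hlt hb.continuous.continuousOn hb.differentiableOn
  have hslope : deriv b a₂ * (a₂ - a₁) < b a₂ - b a₁ := by
    have := hb'' ⟨ha₁.1.trans hξ.1.le, hξ.2.trans ha₂.2⟩ ha₂ hξ.2
    rwa [hξslope, lt_div_iff₀ (sub_pos.2 hlt)] at this
  have key : b a₁ / deriv b a₁ + (a₂ - a₁) < b a₂ / deriv b a₂ :=
    calc b a₁ / deriv b a₁ + (a₂ - a₁) ≤ b a₁ / deriv b a₂ + (a₂ - a₁) := by
          gcongr b a₁ / ?_ + _
          exact hb''.antitoneOn ha₁ ha₂ hlt.le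
      _ < b a₂ / deriv b a₂ := by
          rw [div_add' _ _ _ hd₂.ne', div_lt_div_iff_of_pos_right hd₂]
          linarith
  simp only [foc]
  linarith

theorem continuousOn_foc (hb : Continuous b) (hb1 : Continuous (deriv b))
    (hb' : ∀ x ∈ Ico 0 W, 0 < deriv b x) : ContinuousOn (foc b) (Ico 0 W) :=
  (hb.continuousOn.div hb1.continuousOn fun x hx => (hb' x hx).ne').sub continuousOn_id

theorem tendsto_foc_nhdsLT (hW : 0 < W) (hb : Continuous b) (hb1 : Continuous (deriv b))
    (hbW : 0 < b W) (hb' : ∀ x ∈ Ico 0 W, 0 < deriv b x) (hb'W : deriv b W = 0) :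
    Tendsto (foc b) (𝓝[<] W) atTop := by
  have hden : Tendsto (deriv b) (𝓝[<] W) (𝓝[>] 0) := by
    refine tendsto_nhdsWithin_iff.2 ⟨hb'W ▸ hb1.continuousWithinAt.tendsto, ?_⟩
    filter_upwards [Ico_mem_nhdsLT hW] with x hx using hb' x hx
  have hratio : Tendsto (fun a => b a * (deriv b a)⁻¹) (𝓝[<] W) atTop :=
    hb.continuousWithinAt.tendsto.pos_mul_atTop hbW (tendsto_inv_nhdsGT_zero.comp hden)
  change Tendsto (fun a => b a / deriv b a - a) _ _
  simpa only [div_eq_mul_inv, sub_eq_add_neg] using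
    hratio.atTop_add continuous_neg.continuousWithinAt.tendsto

theorem bijOn_foc (hW : 0 < W) (hb : Differentiable ℝ b) (hb1 : Continuous (deriv b))
    (hb0 : b 0 = 0) (hb' : ∀ x ∈ Ico 0 W, 0 < deriv b x) (hb'W : deriv b W = 0)
    (hb'' : StrictAntiOn (deriv b) (Ico 0 W)) :
    BijOn (foc b) (Ioo 0 W) (Ioi 0) := by
  have hmono := strictMonoOn_foc hb hb0 hb' hb''
  have hzero : (0 : ℝ) ∈ Ico 0 W := ⟨le_rfl, hW⟩
  refine ⟨fun a ha => ?_, hmono.injOn.mono Ioo_subset_Ico_self, fun c hc => ?_⟩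
  · simpa [foc_zero hb0] using hmono hzero (Ioo_subset_Ico_self ha) ha.1
  · have hbW : 0 < b W := hb0 ▸ strictMonoOn_Icc_of_deriv_pos_Ico hb.continuous hb'
      ⟨le_rfl, hW.le⟩ ⟨hW.le, le_rfl⟩ hW
    obtain ⟨a₀, hca₀, ha₀⟩ := (((tendsto_foc_nhdsLT hW hb.continuous hb1 hbW hb' hb'W).eventually
      (eventually_gt_atTop c)).and (Ioo_mem_nhdsLT hW)).exists
    obtain ⟨a, ha, rfl⟩ := intermediate_value_Ioo ha₀.1.le
      ((continuousOn_foc hb.continuous hb1 hb').mono (Icc_subset_Ico_right ha₀.2))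
      ⟨(foc_zero hb0).trans_lt hc, hca₀⟩
    exact ⟨a, ⟨ha.1, ha.2.trans ha₀.2⟩, rfl⟩

end Foc

section Solution

variable {g : ℝ → ℝ} {W c : ℝ} {a : ℝ → ℝ}

theorem eqOn_invFunOn_div (hbij : BijOn g (Ioo 0 W) (Ioi 0))
    (ha : ∀ θ ∈ Ioc 0 1, a θ ∈ Ioo 0 W ∧ g (a θ) = c / θ) :
    EqOn a (fun θ => invFunOn g (Ioo 0 W) (c / θ)) (Ioc 0 1) := fun θ hθ => by
  change a θ = invFunOn g (Ioo 0 W) (c / θ)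
  rw [← (ha θ hθ).2]
  exact (hbij.invOn_invFunOn.1 (ha θ hθ).1).symm

theorem continuousOn_of_eq_div (hg : StrictMonoOn g (Ioo 0 W))
    (hbij : BijOn g (Ioo 0 W) (Ioi 0)) (hc : 0 < c)
    (ha : ∀ θ ∈ Ioc 0 1, a θ ∈ Ioo 0 W ∧ g (a θ) = c / θ) :
    ContinuousOn a (Ioc 0 1) :=
  ((hg.continuousOn_invFunOn hbij isOpen_Ioo isOpen_Ioi).comp
    (continuousOn_const.div continuousOn_id fun _ hθ => hθ.1.ne')
    fun _ hθ => div_pos hc hθ.1).congr (eqOn_invFunOn_div hbij ha)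

theorem antitoneOn_of_eq_div (hg : StrictMonoOn g (Ioo 0 W)) (hc : 0 ≤ c)
    (ha : ∀ θ ∈ Ioc 0 1, a θ ∈ Ioo 0 W ∧ g (a θ) = c / θ) :
    AntitoneOn a (Ioc 0 1) := fun θ₁ h₁ θ₂ h₂ hle =>
  (hg.le_iff_le (ha θ₂ h₂).1 (ha θ₁ h₁).1).1 <| by
    rw [(ha θ₁ h₁).2, (ha θ₂ h₂).2]
    exact div_le_div_of_nonneg_left hc h₁.1 hle

theorem tendsto_nhdsGT_zero_of_eq_div (hW : 0 < W) (hg : StrictMonoOn g (Ioo 0 W))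
    (hbij : BijOn g (Ioo 0 W) (Ioi 0)) (hc : 0 < c)
    (ha : ∀ θ ∈ Ioc 0 1, a θ ∈ Ioo 0 W ∧ g (a θ) = c / θ) :
    Tendsto a (𝓝[>] 0) (𝓝 W) := by
  refine ((hg.tendsto_invFunOn_atTop hW hbij).comp
    (tendsto_inv_nhdsGT_zero.const_mul_atTop hc)).congr' ?_
  filter_upwards [Ioc_mem_nhdsGT one_pos] with θ hθ
  rw [eqOn_invFunOn_div hbij ha hθ]
  simp only [comp_apply, div_eq_mul_inv]

end Solution

noncomputable def stationarySum {K : Type*} [Fintype K] (w δ : K → ℝ) (β : ℝ) (a : K → ℝ)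
    (θ : ℝ) : ℝ :=
  ∑ k, w k * ((β * a k / δ k) / (θ * (β * a k / δ k) + 1))

theorem div_mul_add_one_lt_div_mul_add_one {θ₁ θ₂ x₁ x₂ : ℝ} (hθ₁ : 0 ≤ θ₁) (hθ : θ₁ < θ₂)
    (hx₂ : 0 < x₂) (hx : x₂ ≤ x₁) : x₂ / (θ₂ * x₂ + 1) < x₁ / (θ₁ * x₁ + 1) := by
  have hx₁ : 0 < x₁ := hx₂.trans_le hx
  have hθ₂ : 0 < θ₂ := hθ₁.trans_lt hθ
  rw [div_lt_div_iff₀ (by positivity) (by positivity)]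
  nlinarith [mul_pos hx₁ hx₂, mul_lt_mul_of_pos_right hθ (mul_pos hx₁ hx₂)]

section Stationary

variable {K : Type*} [Fintype K] {w δ : K → ℝ} {β : ℝ}

theorem stationarySum_zero (a : K → ℝ) :
    stationarySum w δ β a 0 = β * ∑ k, w k * a k / δ k := by
  simp only [stationarySum, zero_mul, zero_add, div_one, Finset.mul_sum]
  exact Finset.sum_congr rfl fun k _ => by ring

theorem stationarySum_lt_stationarySum [Nonempty K] (hβ : 0 < β) (hw : ∀ k, 0 < w k)
    (hδ : ∀ k, 0 < δ k) {a₁ a₂ : K → ℝ} {θ₁ θ₂ : ℝ} (hθ₁ : 0 ≤ θ₁) (hθ : θ₁ < θ₂)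
    (ha₂ : ∀ k, 0 < a₂ k) (ha : ∀ k, a₂ k ≤ a₁ k) :
    stationarySum w δ β a₂ θ₂ < stationarySum w δ β a₁ θ₁ :=
  Finset.sum_lt_sum_of_nonempty Finset.univ_nonempty fun k _ =>
    mul_lt_mul_of_pos_left (div_mul_add_one_lt_div_mul_add_one hθ₁ hθ
      (div_pos (mul_pos hβ (ha₂ k)) (hδ k))
      (div_le_div_of_nonneg_right (mul_le_mul_of_nonneg_left (ha k) hβ.le) (hδ k).le)) (hw k)

theorem stationarySum_lt_mul_sum [Nonempty K] (hβ : 0 < β) (hw : ∀ k, 0 < w k)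
    (hδ : ∀ k, 0 < δ k) {a : K → ℝ} {θ : ℝ} (hθ : 0 < θ) (ha : ∀ k, 0 < a k) :
    stationarySum w δ β a θ < β * ∑ k, w k * a k / δ k :=
  stationarySum_zero (w := w) (δ := δ) a ▸
    stationarySum_lt_stationarySum hβ hw hδ le_rfl hθ ha fun _ => le_rfl

theorem stationarySum_one_lt_one [Nonempty K] (hβ : 0 < β) (hw : ∀ k, 0 < w k)
    (hsum : ∑ k, w k = 1) (hδ : ∀ k, 0 < δ k) {a : K → ℝ} (ha : ∀ k, 0 < a k) :
    stationarySum w δ β a 1 < 1 :=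
  (Finset.sum_lt_sum_of_nonempty Finset.univ_nonempty fun k _ =>
    mul_lt_of_lt_one_right (hw k) <| by
      have hx : 0 < β * a k / δ k := div_pos (mul_pos hβ (ha k)) (hδ k)
      rw [one_mul, div_lt_one (by positivity)]
      linarith).trans_eq hsum

theorem tendsto_stationarySum {ι : Type*} {l : Filter ι} {a : ι → K → ℝ} {θ : ι → ℝ}
    {A : K → ℝ} {θ₀ : ℝ} (ha : ∀ k, Tendsto (fun i => a i k) l (𝓝 (A k)))
    (hθ : Tendsto θ l (𝓝 θ₀)) (hden : ∀ k, θ₀ * (β * A k / δ k) + 1 ≠ 0) :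
    Tendsto (fun i => stationarySum w δ β (a i) (θ i)) l (𝓝 (stationarySum w δ β A θ₀)) :=
  tendsto_finsetSum _ fun k _ => by
    have hx := ((ha k).const_mul β).div_const (δ k)
    exact tendsto_const_nhds.mul (hx.div ((hθ.mul hx).add_const 1) (hden k))

theorem existsUnique_stationarySum_eq_one [Nonempty K] (hβ : 0 < β) (hw : ∀ k, 0 < w k)
    (hsum : ∑ k, w k = 1) (hδ : ∀ k, 0 < δ k) {W : ℝ} (hcond : 1 < β * W * ∑ k, w k / δ k)
    {a : ℝ → K → ℝ} (hpos : ∀ θ ∈ Ioc (0 : ℝ) 1, ∀ k, 0 < a θ k)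
    (hcont : ∀ k, ContinuousOn (fun θ => a θ k) (Ioc 0 1))
    (hanti : ∀ k, AntitoneOn (fun θ => a θ k) (Ioc 0 1))
    (hlim : ∀ k, Tendsto (fun θ => a θ k) (𝓝[>] 0) (𝓝 W)) :
    ∃! θ, θ ∈ Ioo 0 1 ∧ stationarySum w δ β (a θ) θ = 1 := by
  have hlimit : stationarySum w δ β (fun _ => W) 0 = β * W * ∑ k, w k / δ k := by
    rw [stationarySum_zero, Finset.mul_sum, Finset.mul_sum]
    exact Finset.sum_congr rfl fun k _ => by ring
  refine existsUnique_eq_of_strictAntiOn_Ioc one_pos (fun θ hθ => ?_)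
    (fun θ₁ h₁ θ₂ h₂ hlt => stationarySum_lt_stationarySum hβ hw hδ h₁.1.le hlt (hpos θ₂ h₂)
      fun k => hanti k h₁ h₂ hlt.le)
    (stationarySum_one_lt_one hβ hw hsum hδ (hpos 1 ⟨one_pos, le_rfl⟩))
    (tendsto_stationarySum hlim (tendsto_id.mono_left nhdsWithin_le_nhds) fun k => by simp)
    (hlimit ▸ hcond)
  have hden : ∀ k, θ * (β * a θ k / δ k) + 1 ≠ 0 := fun k =>
    (add_pos (mul_pos hθ.1 (div_pos (mul_pos hβ (hpos θ hθ k)) (hδ k))) one_pos).ne'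
  exact tendsto_stationarySum (fun k => hcont k θ hθ) continuousWithinAt_id hden

theorem existsUnique_stationarySum_eq_one_of_eq_div [Nonempty K] (hβ : 0 < β)
    (hw : ∀ k, 0 < w k) (hsum : ∑ k, w k = 1) (hδ : ∀ k, 0 < δ k) {W : ℝ} (hW : 0 < W)
    (hcond : 1 < β * W * ∑ k, w k / δ k) {g : ℝ → ℝ} (hg : StrictMonoOn g (Ioo 0 W))
    (hbij : BijOn g (Ioo 0 W) (Ioi 0)) {c : K → ℝ} (hc : ∀ k, 0 < c k) {a : ℝ → K → ℝ}
    (ha : ∀ k, ∀ θ ∈ Ioc (0 : ℝ) 1, a θ k ∈ Ioo 0 W ∧ g (a θ k) = c k / θ) :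
    ∃! θ, θ ∈ Ioo 0 1 ∧ stationarySum w δ β (a θ) θ = 1 :=
  existsUnique_stationarySum_eq_one hβ hw hsum hδ hcond (fun θ hθ k => (ha k θ hθ).1.1)
    (fun k => continuousOn_of_eq_div hg hbij (hc k) (ha k))
    (fun k => antitoneOn_of_eq_div hg (hc k).le (ha k))
    (fun k => tendsto_nhdsGT_zero_of_eq_div hW hg hbij (hc k) (ha k))

end Stationary

/-- **Conjectural equilibrium with heterogeneous agents.**
(i) For each `θ ∈ (0,1]` and each type `k` there is a unique best response
`aₖ*(θ) ∈ (0, W)` solving `b(a)/b'(a) − a = (ρ + δₖ)/(β·θ)`; it is strictly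
decreasing in `θ` and, for fixed `θ`, larger for types with larger curing rate.
(ii) There is a unique `θ^CE ∈ (0,1)` satisfying the stationarity condition
`∑ₖ wₖ·(β·aₖ*(θ^CE)/δₖ)/(θ^CE·β·aₖ*(θ^CE)/δₖ + 1) = 1`; in particular
`β·∑ₖ wₖ·aₖ*(θ^CE)/δₖ > 1`, so the equilibrium lies outside the extinction
region and the infection never extinguishes. -/
theorem heterogeneous_conjectural_equilibrium
    (K : Type*) [Fintype K] [Nonempty K] (β ρ W : ℝ)
    (hβ : 0 < β) (hρ : 0 < ρ) (hW : 0 < W)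
    (w δ : K → ℝ) (hw : ∀ k, 0 < w k) (hsum : ∑ k, w k = 1)
    (hδ : ∀ k, 0 < δ k)
    (b : ℝ → ℝ) (hb : ContDiff ℝ 2 b) (hb0 : b 0 = 0)
    (hb' : ∀ x : ℝ, 0 ≤ x → x < W → 0 < deriv b x) (hbW : deriv b W = 0)
    (hb'' : ∀ x : ℝ, 0 ≤ x → x ≤ W → deriv (deriv b) x < 0)
    (hcond : 1 < β * W * ∑ k, w k / δ k) :
    (∀ θ : ℝ, 0 < θ → θ ≤ 1 → ∀ k : K,
      ∃! a : ℝ, a ∈ Set.Ioo 0 W ∧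
        b a / deriv b a - a = (ρ + δ k) / (β * θ)) ∧
    (∀ θ₁ θ₂ : ℝ, 0 < θ₁ → θ₁ < θ₂ → θ₂ ≤ 1 → ∀ k : K, ∀ a₁ a₂ : ℝ,
      a₁ ∈ Set.Ioo 0 W → a₂ ∈ Set.Ioo 0 W →
      b a₁ / deriv b a₁ - a₁ = (ρ + δ k) / (β * θ₁) →
      b a₂ / deriv b a₂ - a₂ = (ρ + δ k) / (β * θ₂) →
      a₂ < a₁) ∧
    (∀ θ : ℝ, 0 < θ → θ ≤ 1 → ∀ k₁ k₂ : K, δ k₁ < δ k₂ → ∀ a₁ a₂ : ℝ,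
      a₁ ∈ Set.Ioo 0 W → a₂ ∈ Set.Ioo 0 W →
      b a₁ / deriv b a₁ - a₁ = (ρ + δ k₁) / (β * θ) →
      b a₂ / deriv b a₂ - a₂ = (ρ + δ k₂) / (β * θ) →
      a₁ < a₂) ∧
    (∀ astar : ℝ → K → ℝ,
      (∀ θ : ℝ, 0 < θ → θ ≤ 1 → ∀ k : K, astar θ k ∈ Set.Ioo 0 W ∧
        b (astar θ k) / deriv b (astar θ k) - astar θ k = (ρ + δ k) / (β * θ)) →
      (∃! θCE : ℝ, θCE ∈ Set.Ioo (0 : ℝ) 1 ∧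
        ∑ k, w k * ((β * astar θCE k / δ k) / (θCE * (β * astar θCE k / δ k) + 1))
          = 1) ∧
      (∀ θCE ∈ Set.Ioo (0 : ℝ) 1,
        ∑ k, w k * ((β * astar θCE k / δ k) / (θCE * (β * astar θCE k / δ k) + 1))
          = 1 →
        1 < β * ∑ k, w k * astar θCE k / δ k)) := by
  have hbd : Differentiable ℝ b := hb.differentiable two_ne_zero
  have hb1 : Continuous (deriv b) := hb.continuous_deriv one_le_two
  have hpos : ∀ x ∈ Ico 0 W, 0 < deriv b x := fun x hx => hb' x hx.1 hx.2
  have hconc : StrictAntiOn (deriv b) (Ico 0 W) :=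
    strictAntiOn_of_deriv_neg (convex_Ico 0 W) hb1.continuousOn fun x hx => by
      rw [interior_Ico] at hx
      exact hb'' x hx.1.le hx.2.le
  have hmono : StrictMonoOn (foc b) (Ioo 0 W) :=
    (strictMonoOn_foc hbd hb0 hpos hconc).mono Ioo_subset_Ico_self
  have hbij : BijOn (foc b) (Ioo 0 W) (Ioi 0) := bijOn_foc hW hbd hb1 hb0 hpos hbW hconc
  have hρδ : ∀ k, 0 < ρ + δ k := fun k => add_pos hρ (hδ k)
  refine ⟨fun θ hθ _ k => ?_, fun θ₁ θ₂ hθ₁ hθ _ k a₁ a₂ ha₁ ha₂ h₁ h₂ => ?_,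
    fun θ hθ _ k₁ k₂ hk a₁ a₂ ha₁ ha₂ h₁ h₂ => ?_, fun astar hastar => ?_⟩
  · obtain ⟨a, ha, hfa⟩ := hbij.surjOn (div_pos (hρδ k) (mul_pos hβ hθ))
    exact ⟨a, ⟨ha, hfa⟩, fun a' h => hbij.injOn h.1 ha (h.2.trans hfa.symm)⟩
  · refine (hmono.lt_iff_lt ha₂ ha₁).1 ?_
    rw [foc, foc, h₁, h₂]
    exact div_lt_div_of_pos_left (hρδ k) (mul_pos hβ hθ₁) (mul_lt_mul_of_pos_left hθ hβ)
  · refine (hmono.lt_iff_lt ha₁ ha₂).1 ?_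
    rw [foc, foc, h₁, h₂]
    exact div_lt_div_of_pos_right (by linarith) (mul_pos hβ hθ)
  · have hsol : ∀ k, ∀ θ ∈ Ioc (0 : ℝ) 1,
        astar θ k ∈ Ioo 0 W ∧ foc b (astar θ k) = (ρ + δ k) / β / θ := fun k θ hθ => by
      rw [div_div]
      exact hastar θ hθ.1 hθ.2 k
    refine ⟨existsUnique_stationarySum_eq_one_of_eq_div hβ hw hsum hδ hW hcond hmono hbij
      (fun k => div_pos (hρδ k) hβ) hsol, fun θ hθ hstat => ?_⟩
    exact hstat.symm.trans_lt (stationarySum_lt_mul_sum hβ hw hδ hθ.1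
      fun k => (hsol k θ ⟨hθ.1, hθ.2.le⟩).1.1)
end
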